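/- arXiv:0712.2390 — 5 statements merged into one kernel-verified Lean document; each statement's English description precedes it below -/
import Mathlib

section
/- Fix e ≥ 2 and let λ, μ be partitions with the same e-core, and r a large integer. Then μ dominates λ (i.e., 𝔛^e_r(μ) ⪰ 𝔛^e_r(λ)) if and only if 𝔚^e_r(μ) ⪰ 𝔚^e_r(λ), where 𝔚^e_r denotes the weight multiset. -/
open scoped BigOperators

def IsPartition (f : ℕ → ℕ) : Prop :=
  (∀ ⦃i j : ℕ⦄, i ≤ j → f j ≤ f i) ∧ ∃ N : ℕ, ∀ i, N ≤ i → f i = 0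

noncomputable def conj (f : ℕ → ℕ) (i : ℕ) : ℕ := Nat.card {j : ℕ // i + 1 ≤ f j}

def betaSet (f : ℕ → ℕ) (r : ℕ) : Multiset ℕ :=
  (Multiset.range r).map fun i => f i + (r - 1 - i)

/-- e-extension of a multiset: z gets multiplicity |B ∩ {z, z+e, z+2e, …}|. -/
def eExt (e : ℕ) (B : Multiset ℕ) : Multiset ℕ :=
  B.bind fun b => (Multiset.range (b / e + 1)).map fun j => b - j * e

def runnerCount (e d : ℕ) (B : Multiset ℕ) : ℕ :=
  Multiset.card (B.filter fun b => b % e = d)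

/-- Beta-multiset of the e-core: slide all beads up their runners. -/
def coreBeta (e : ℕ) (B : Multiset ℕ) : Multiset ℕ :=
  (Multiset.range e).bind fun j =>
    (Multiset.range (runnerCount e j B)).map fun i => j + i * e

/-- Weight multiset 𝔚: records the start of each single-step slide; equivalently
determined by 𝔛 = 𝔛(core) ⊔ 𝔚. -/
def weightMS (e : ℕ) (B : Multiset ℕ) : Multiset ℕ :=
  eExt e B - eExt e (coreBeta e B)

def eWeight (e : ℕ) (B : Multiset ℕ) : ℕ := Multiset.card (weightMS e B)

def DomMS (I J : Multiset ℕ) : Prop := Multiset.Rel (fun a b => b ≤ a) I J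

/-- refined dominance order: same e-core and 𝔛^e_r(g) ⪰ 𝔛^e_r(f). -/
def Dominates (e r : ℕ) (g f : ℕ → ℕ) : Prop :=
  coreBeta e (betaSet g r) = coreBeta e (betaSet f r) ∧
    DomMS (eExt e (betaSet g r)) (eExt e (betaSet f r))

/- ### Auxiliary lemmas -/

lemma countP_range_le (k m : ℕ) :
    Multiset.countP (fun i => k ≤ i) (Multiset.range m) = m - k := by
  induction m with
  | zero => simp
  | succ m ih =>
    rw [Multiset.range_succ, Multiset.countP_cons, ih]
    by_cases h : k ≤ m <;> simp [h] <;> omega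

lemma count_slide (e b z : ℕ) (he : 1 ≤ e) :
    Multiset.count z ((Multiset.range (b / e + 1)).map fun j => b - j * e)
      = if z ≤ b ∧ b % e = z % e then 1 else 0 := by
  rw [Multiset.count_map, ← Multiset.countP_eq_card_filter]
  have hpos : 0 < e := he
  have key : ∀ j ∈ Multiset.range (b / e + 1),
      (z = b - j * e) = ((z ≤ b ∧ b % e = z % e) ∧ j = (b - z) / e) := by
    intro j hj
    rw [Multiset.mem_range] at hj
    have hje : j * e ≤ b := by
      have : j ≤ b / e := by omega
      exact (Nat.le_div_iff_mul_le hpos).mp this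
    apply propext
    constructor
    · intro hz
      have hb : b = z + j * e := by
        have := hje
        set t := j * e with ht
        omega
      have h1 : z ≤ b := by omega
      have h2 : b % e = z % e := by rw [hb, Nat.add_mul_mod_self_right]
      refine ⟨⟨h1, h2⟩, ?_⟩
      have : b - z = j * e := by
        set t := j * e with ht
        omega
      rw [this, Nat.mul_div_cancel _ hpos]
    · rintro ⟨⟨h1, h2⟩, rfl⟩
      have hdvd : e ∣ b - z := (Nat.modEq_iff_dvd' h1).mp h2.symm
      have hmul : (b - z) / e * e = b - z := Nat.div_mul_cancel hdvd
      rw [hmul, Nat.sub_sub_self h1]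
  rw [Multiset.countP_congr rfl key]
  by_cases hc : z ≤ b ∧ b % e = z % e
  · rw [if_pos hc]
    have hmem : (b - z) / e ∈ Multiset.range (b / e + 1) := by
      rw [Multiset.mem_range]
      have : (b - z) / e ≤ b / e := Nat.div_le_div_right (Nat.sub_le b z)
      omega
    have hcongr : ∀ j ∈ Multiset.range (b / e + 1),
        ((z ≤ b ∧ b % e = z % e) ∧ j = (b - z) / e) = (j = (b - z) / e) := by
      intro j _
      simp [hc]
    rw [Multiset.countP_congr rfl hcongr, Multiset.countP_eq_card_filter,
      Multiset.filter_eq', Multiset.card_replicate,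
      Multiset.count_eq_one_of_mem (Multiset.nodup_range _) hmem]
  · rw [if_neg hc, Multiset.countP_eq_zero]
    intro j _
    simp only [not_and]
    intro h _
    exact absurd h hc

lemma count_eExt (e : ℕ) (he : 1 ≤ e) (B : Multiset ℕ) (z : ℕ) :
    Multiset.count z (eExt e B)
      = Multiset.countP (fun b => z ≤ b ∧ b % e = z % e) B := by
  induction B using Multiset.induction_on with
  | empty => simp [eExt]
  | cons b B ih =>
    rw [eExt, Multiset.cons_bind, Multiset.count_add, ← eExt, ih,
      Multiset.countP_cons, count_slide e b z he]
    omega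

lemma countP_bind {α β : Type*} (p : β → Prop) [DecidablePred p]
    (s : Multiset α) (f : α → Multiset β) :
    Multiset.countP p (s.bind f) = (s.map fun a => Multiset.countP p (f a)).sum := by
  induction s using Multiset.induction_on with
  | empty => simp
  | cons a s ih => simp [Multiset.cons_bind, Multiset.countP_add, ih]

lemma countP_coreBeta (e : ℕ) (he : 1 ≤ e) (B : Multiset ℕ) (z : ℕ) :
    Multiset.countP (fun b => z ≤ b ∧ b % e = z % e) (coreBeta e B)
      = runnerCount e (z % e) B - z / e := by
  have hpos : 0 < e := he
  rw [coreBeta, countP_bind]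
  have hg : ∀ j ∈ Multiset.range e,
      (fun a => Multiset.countP (fun b => z ≤ b ∧ b % e = z % e)
        ((Multiset.range (runnerCount e a B)).map fun i => a + i * e)) j
      = (fun a => if a = z % e then runnerCount e a B - z / e else 0) j := by
    intro j hj
    rw [Multiset.mem_range] at hj
    simp only
    rw [Multiset.countP_map, ← Multiset.countP_eq_card_filter]
    have hmod : ∀ i : ℕ, (j + i * e) % e = j := by
      intro i
      rw [Nat.add_mul_mod_self_right, Nat.mod_eq_of_lt hj]
    by_cases hd : j = z % e
    · subst hd
      rw [if_pos rfl]
      have key : ∀ i ∈ Multiset.range (runnerCount e (z % e) B),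
          (z ≤ z % e + i * e ∧ (z % e + i * e) % e = z % e) = (z / e ≤ i) := by
        intro i _
        rw [hmod i]
        apply propext
        have hz : z % e + z / e * e = z := Nat.mod_add_div' z e
        constructor
        · intro ⟨h1, _⟩
          by_contra hlt
          push_neg at hlt
          have : i * e < z / e * e := (Nat.mul_lt_mul_right hpos).mpr hlt
          omega
        · intro h
          have : z / e * e ≤ i * e := Nat.mul_le_mul_right e h
          exact ⟨by omega, rfl⟩
      rw [Multiset.countP_congr rfl key, countP_range_le]
    · rw [if_neg hd, Multiset.countP_eq_zero]
      intro i _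
      simp only [not_and]
      intro _
      rw [hmod i]
      exact hd
  rw [Multiset.map_congr rfl hg]
  have : ((Multiset.range e).map fun a => if a = z % e then runnerCount e a B - z / e else 0).sum
      = ∑ a ∈ Finset.range e, (if a = z % e then runnerCount e a B - z / e else 0) := rfl
  rw [this, Finset.sum_ite_eq' (Finset.range e) (z % e)
    (fun a => runnerCount e a B - z / e)]
  rw [if_pos (Finset.mem_range.mpr (Nat.mod_lt z hpos))]

lemma countP_split {α : Type*} (p q : α → Prop) [DecidablePred p] [DecidablePred q]
    (s : Multiset α) :
    Multiset.countP p s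
      = Multiset.countP (fun a => p a ∧ q a) s
        + Multiset.countP (fun a => p a ∧ ¬ q a) s := by
  induction s using Multiset.induction_on with
  | empty => simp
  | cons a s ih =>
    rw [Multiset.countP_cons, Multiset.countP_cons, Multiset.countP_cons, ih]
    by_cases hp : p a <;> by_cases hq : q a <;> simp [hp, hq] <;> omega

lemma countP_lt_le (e z : ℕ) (he : 1 ≤ e) (B : Multiset ℕ) (hB : B.Nodup) :
    Multiset.countP (fun b => b % e = z % e ∧ b < z) B ≤ z / e := by
  have hpos : 0 < e := he
  rw [Multiset.countP_eq_card_filter]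
  have hnd : (B.filter fun b => b % e = z % e ∧ b < z).Nodup := hB.filter _
  have hsub : (B.filter fun b => b % e = z % e ∧ b < z)
      ≤ (Multiset.range (z / e)).map fun i => z % e + i * e := by
    rw [Multiset.le_iff_subset hnd]
    intro x hx
    rw [Multiset.mem_filter] at hx
    obtain ⟨-, hxm, hxz⟩ := hx
    rw [Multiset.mem_map]
    refine ⟨x / e, ?_, ?_⟩
    · rw [Multiset.mem_range]
      by_contra hle
      push_neg at hle
      have h1 : z / e * e ≤ x / e * e := Nat.mul_le_mul_right e hle
      have h2 : x % e + x / e * e = x := Nat.mod_add_div' x e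
      have h3 : z % e + z / e * e = z := Nat.mod_add_div' z e
      omega
    · have h2 : x % e + x / e * e = x := Nat.mod_add_div' x e
      omega
  calc Multiset.card (B.filter fun b => b % e = z % e ∧ b < z)
      ≤ Multiset.card ((Multiset.range (z / e)).map fun i => z % e + i * e) :=
        Multiset.card_le_card hsub
    _ = z / e := by rw [Multiset.card_map, Multiset.card_range]

lemma eExt_core_le (e : ℕ) (he : 1 ≤ e) (B : Multiset ℕ) (hB : B.Nodup) :
    eExt e (coreBeta e B) ≤ eExt e B := by
  rw [Multiset.le_iff_count]
  intro z
  rw [count_eExt e he, count_eExt e he, countP_coreBeta e he]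
  have h1 : runnerCount e (z % e) B
      = Multiset.countP (fun b => b % e = z % e ∧ z ≤ b) B
        + Multiset.countP (fun b => b % e = z % e ∧ ¬ z ≤ b) B := by
    rw [runnerCount, ← Multiset.countP_eq_card_filter]
    exact countP_split _ _ B
  have h2 : Multiset.countP (fun b => b % e = z % e ∧ ¬ z ≤ b) B
      = Multiset.countP (fun b => b % e = z % e ∧ b < z) B := by
    apply Multiset.countP_congr rfl
    intro x _
    apply propext
    constructor
    · rintro ⟨h, h'⟩; exact ⟨h, by omega⟩
    · rintro ⟨h, h'⟩; exact ⟨h, by omega⟩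
  have h3 : Multiset.countP (fun b => b % e = z % e ∧ z ≤ b) B
      = Multiset.countP (fun b => z ≤ b ∧ b % e = z % e) B := by
    apply Multiset.countP_congr rfl
    intro x _
    apply propext
    exact and_comm
  have h4 := countP_lt_le e z he B hB
  omega

lemma betaSet_nodup (f : ℕ → ℕ) (hf : ∀ ⦃i j : ℕ⦄, i ≤ j → f j ≤ f i) (r : ℕ) :
    (betaSet f r).Nodup := by
  rw [betaSet]
  apply Multiset.Nodup.map_on _ (Multiset.nodup_range r)
  intro i hi j hj hij
  rw [Multiset.mem_range] at hi hj
  rcases lt_trichotomy i j with h | h | h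
  · have := hf h.le
    omega
  · exact h
  · have := hf h.le
    omega

lemma rel_cons_cancel {α : Type*} {r : α → α → Prop} (ht : Transitive r) {c : α}
    {A B : Multiset α} (h : Multiset.Rel r (c ::ₘ A) (c ::ₘ B)) : Multiset.Rel r A B := by
  rw [Multiset.rel_cons_left] at h
  obtain ⟨b, bs, hcb, hrel, heq⟩ := h
  rcases Multiset.cons_eq_cons.mp heq with ⟨hb, hbs⟩ | ⟨hne, cs, hBc, hbsc⟩
  · rw [hbs]
    exact hrel
  · rw [hbsc, Multiset.rel_cons_right] at hrel
    obtain ⟨a, as, hac, hrel2, hA⟩ := hrel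
    rw [hA, hBc]
    exact Multiset.Rel.cons (ht hac hcb) hrel2

lemma rel_add_cancel {α : Type*} {r : α → α → Prop} (ht : Transitive r) (C : Multiset α)
    {A B : Multiset α} (h : Multiset.Rel r (C + A) (C + B)) : Multiset.Rel r A B := by
  induction C using Multiset.induction_on with
  | empty => simpa using h
  | cons c C ih =>
    rw [Multiset.cons_add, Multiset.cons_add] at h
    exact ih (rel_cons_cancel ht h)

/-- for λ, μ with the same e-core, 𝔛^e_r(μ) ⪰ 𝔛^e_r(λ) iff
𝔚^e_r(μ) ⪰ 𝔚^e_r(λ). -/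
theorem stmt4 (e : ℕ) (he : 2 ≤ e) (f g : ℕ → ℕ)
    (hf : IsPartition f) (hg : IsPartition g) (r : ℕ)
    (hrf : conj f 0 ≤ r) (hrg : conj g 0 ≤ r)
    (hcore : coreBeta e (betaSet g r) = coreBeta e (betaSet f r)) :
    DomMS (eExt e (betaSet g r)) (eExt e (betaSet f r)) ↔
      DomMS (weightMS e (betaSet g r)) (weightMS e (betaSet f r)) := by
  have he1 : 1 ≤ e := by omega
  have hnf : (betaSet f r).Nodup := betaSet_nodup f hf.1 r
  have hng : (betaSet g r).Nodup := betaSet_nodup g hg.1 r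
  have hlef : eExt e (coreBeta e (betaSet f r)) ≤ eExt e (betaSet f r) :=
    eExt_core_le e he1 _ hnf
  have hleg : eExt e (coreBeta e (betaSet g r)) ≤ eExt e (betaSet g r) :=
    eExt_core_le e he1 _ hng
  have hWf : eExt e (coreBeta e (betaSet f r)) + weightMS e (betaSet f r)
      = eExt e (betaSet f r) := by
    rw [weightMS, add_comm]
    exact tsub_add_cancel_of_le hlef
  have hWg : eExt e (coreBeta e (betaSet f r)) + weightMS e (betaSet g r)
      = eExt e (betaSet g r) := by
    rw [weightMS, hcore, add_comm]
    exact tsub_add_cancel_of_le (hcore ▸ hleg)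
  have htrans : Transitive (fun a b : ℕ => b ≤ a) := fun a b c h1 h2 => le_trans h2 h1
  constructor
  · intro h
    rw [DomMS, ← hWg, ← hWf] at h
    exact rel_add_cancel htrans _ h
  · intro h
    rw [DomMS, ← hWg, ← hWf]
    exact Multiset.Rel.add (Multiset.rel_refl_of_refl_on fun x _ => le_refl x) h
end

section
/- Fix e ≥ 2. For partitions λ and μ, μ ⊵ λ if and only if λ' ⊵ μ', where ⊵ is the (refined) dominance order and ' denotes conjugation. -/
open scoped BigOperators

namespace S5

def countGe (t : ℕ) (M : Multiset ℕ) : ℕ := Multiset.card (M.filter (fun x => t ≤ x))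

lemma countGe_cons (t a : ℕ) (s : Multiset ℕ) :
    countGe t (a ::ₘ s) = (if t ≤ a then 1 else 0) + countGe t s := by
  simp only [countGe, Multiset.filter_cons, Multiset.card_add]
  split <;> simp

lemma countGe_zero_card (M : Multiset ℕ) : countGe 0 M = Multiset.card M := by
  rw [countGe, Multiset.filter_eq_self.2 (fun a _ => Nat.zero_le a)]

lemma countGe_eq_zero {t : ℕ} {M : Multiset ℕ} (h : ∀ x ∈ M, x < t) : countGe t M = 0 := by
  rw [countGe, Multiset.card_eq_zero, Multiset.filter_eq_nil]
  intro a ha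
  exact not_le.2 (h a ha)

lemma exists_max {J : Multiset ℕ} (h : J ≠ 0) : ∃ b ∈ J, ∀ c ∈ J, c ≤ b := by
  induction J using Multiset.induction with
  | empty => exact absurd rfl h
  | cons a J ih =>
    rcases eq_or_ne J 0 with rfl | hJ
    · exact ⟨a, by simp, by simp⟩
    · obtain ⟨b, hb, hmax⟩ := ih hJ
      rcases le_total a b with hab | hba
      · refine ⟨b, Multiset.mem_cons_of_mem hb, ?_⟩
        intro c hc
        rcases Multiset.mem_cons.1 hc with rfl | hc
        · exact hab
        · exact hmax c hc
      · refine ⟨a, Multiset.mem_cons_self a J, ?_⟩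
        intro c hc
        rcases Multiset.mem_cons.1 hc with rfl | hc
        · exact le_rfl
        · exact (hmax c hc).trans hba

lemma hall : ∀ (J I : Multiset ℕ), Multiset.card I = Multiset.card J →
    (∀ t, countGe t J ≤ countGe t I) → DomMS I J := by
  intro J
  induction J using Multiset.strongInductionOn with
  | _ J ih =>
    intro I hc hcnt
    rcases eq_or_ne J 0 with rfl | hJ
    · have : I = 0 := by simpa [Multiset.card_eq_zero] using hc
      simp [this, DomMS, Multiset.Rel.zero]
    · obtain ⟨b, hbJ, hbmax⟩ := exists_max hJ
      have h2 : 0 < countGe b I :=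
        lt_of_lt_of_le
          (Multiset.card_pos_iff_exists_mem.2 ⟨b, Multiset.mem_filter.2 ⟨hbJ, le_rfl⟩⟩)
          (hcnt b)
      obtain ⟨a, haI'⟩ := Multiset.card_pos_iff_exists_mem.1 h2
      obtain ⟨haI, hba⟩ := Multiset.mem_filter.1 haI'
      have hcards : Multiset.card (I.erase a) = Multiset.card (J.erase b) := by
        rw [Multiset.card_erase_of_mem haI, Multiset.card_erase_of_mem hbJ, hc]
      have key : DomMS (I.erase a) (J.erase b) := by
        apply ih (J.erase b) (Multiset.erase_lt.2 hbJ) _ hcards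
        intro t
        have hJ' : countGe t J = (if t ≤ b then 1 else 0) + countGe t (J.erase b) := by
          conv_lhs => rw [← Multiset.cons_erase hbJ]
          rw [countGe_cons]
        have hI' : countGe t I = (if t ≤ a then 1 else 0) + countGe t (I.erase a) := by
          conv_lhs => rw [← Multiset.cons_erase haI]
          rw [countGe_cons]
        by_cases htb : t ≤ b
        · have hta : t ≤ a := htb.trans hba
          have := hcnt t
          rw [hJ', hI', if_pos htb, if_pos hta] at this
          omega
        · have hz : countGe t (J.erase b) = 0 := by
            apply countGe_eq_zero
            intro x hx
            have hxJ := Multiset.mem_of_mem_erase hx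
            have := hbmax x hxJ
            omega
          omega
      have hI := Multiset.cons_erase haI
      have hJ2 := Multiset.cons_erase hbJ
      rw [← hI, ← hJ2]
      exact Multiset.Rel.cons hba key

lemma domMS_iff (I J : Multiset ℕ) :
    DomMS I J ↔ Multiset.card I = Multiset.card J ∧ ∀ t, countGe t J ≤ countGe t I := by
  constructor
  · intro h
    refine ⟨Multiset.card_eq_card_of_rel h, ?_⟩
    intro t
    induction h with
    | zero => simp
    | @cons a b as bs hab h ih =>
      rw [countGe_cons, countGe_cons]
      have h2 : (if t ≤ b then 1 else 0 : ℕ) ≤ if t ≤ a then 1 else 0 := by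
        by_cases hb : t ≤ b
        · have ha : t ≤ a := hb.trans hab
          simp [hb, ha]
        · simp [hb]
      omega
  · rintro ⟨hc, hcnt⟩
    exact hall J I hc hcnt


def Wc (e t b : ℕ) : ℕ := ((Finset.range (b+1)).filter (fun v => t ≤ v ∧ v % e = b % e)).card

def cL (e M x : ℕ) : ℕ := ((Finset.range (M+1)).filter (fun u => u % e = x % e)).card

lemma step_le {e u x : ℕ} (h : u % e = x % e) (hlt : u < x) : u + e ≤ x := by
  have hu := Nat.div_add_mod u e
  have hx := Nat.div_add_mod x e
  have hdiv : u / e < x / e := by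
    by_contra hcon
    push_neg at hcon
    have : e * (x / e) ≤ e * (u / e) := Nat.mul_le_mul_left e hcon
    omega
  have h2 : e * (u / e + 1) ≤ e * (x / e) := Nat.mul_le_mul_left e hdiv
  rw [Nat.mul_add, Nat.mul_one] at h2
  omega

lemma G {e : ℕ} (he : 1 ≤ e) (x : ℕ) :
    ((Finset.range x).filter (fun v => v % e = x % e)).card = x / e := by
  have key := Finset.card_bij' (s := Finset.range (x/e))
    (t := (Finset.range x).filter (fun v => v % e = x % e))
    (i := fun i _ => x % e + i * e) (j := fun v _ => v / e)
    ?_ ?_ ?_ ?_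
  · rw [← key, Finset.card_range]
  · intro i hi
    simp only [Finset.mem_range] at hi
    simp only [Finset.mem_filter, Finset.mem_range]
    have h1 : e * (i + 1) ≤ e * (x / e) := Nat.mul_le_mul_left e hi
    have h2 : e * (x / e) + x % e = x := Nat.div_add_mod x e
    constructor
    · rw [Nat.mul_add, Nat.mul_one] at h1
      have h3 : i * e = e * i := Nat.mul_comm i e
      omega
    · rw [Nat.add_mul_mod_self_right]
      exact Nat.mod_mod_of_dvd x dvd_rfl
  · intro v hv
    simp only [Finset.mem_filter, Finset.mem_range] at hv ⊢
    obtain ⟨hvx, hmod⟩ := hv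
    by_contra hcon
    push_neg at hcon
    have h1 : e * (x/e) ≤ e * (v/e) := Nat.mul_le_mul_left e hcon
    have h2 := Nat.div_add_mod x e
    have h3 := Nat.div_add_mod v e
    omega
  · intro i hi
    show (x % e + i * e) / e = i
    rw [Nat.add_mul_div_right _ _ (by omega : 0 < e),
      Nat.div_eq_of_lt (Nat.mod_lt _ (by omega))]
    simp
  · intro v hv
    simp only [Finset.mem_filter, Finset.mem_range] at hv
    obtain ⟨hvx, hmod⟩ := hv
    show x % e + v / e * e = v
    have h3 := Nat.div_add_mod v e
    have h4 : v / e * e = e * (v / e) := Nat.mul_comm _ _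
    omega

lemma Wc_zero {e : ℕ} (he : 1 ≤ e) (x : ℕ) : Wc e 0 x = x / e + 1 := by
  unfold Wc
  rw [show (Finset.range (x+1)).filter (fun v => 0 ≤ v ∧ v % e = x % e)
      = (Finset.range (x+1)).filter (fun v => v % e = x % e) from
      Finset.filter_congr (by simp)]
  rw [Finset.range_add_one, Finset.filter_insert, if_pos rfl,
    Finset.card_insert_of_notMem (fun h => by simp at h), G he x]

lemma Wc_eq_zero {e t b : ℕ} (h : b < t) : Wc e t b = 0 := by
  rw [Wc, Finset.card_eq_zero, Finset.filter_eq_empty_iff]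
  intro v hv
  simp only [Finset.mem_range] at hv
  rintro ⟨h1, -⟩
  omega

lemma mod_cancel {e a b c d : ℕ} (h : a + b = c + d) (hbd : b % e = d % e) : a % e = c % e := by
  have h1 : b ≡ d [MOD e] := hbd
  exact Nat.ModEq.add_right_cancel h1 (by rw [h])

/-- The key combinatorial identity. -/
lemma P {e : ℕ} (he : 1 ≤ e) {n x t : ℕ} (hx : x ≤ n) (ht : t ≤ n) :
    Wc e t (n - x) + x / e = cL e (n - t) x + Wc e (n + 1 + e - t) x := by
  classical
  -- Step (i): Wc e t (n-x) = number of u ∈ [0, n-t] with u % e = x % e and x ≤ u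
  have stepA : Wc e t (n - x)
      = ((Finset.range (n - t + 1)).filter (fun u => u % e = x % e ∧ x ≤ u)).card := by
    unfold Wc
    apply Finset.card_bij' (i := fun v _ => n - v) (j := fun u _ => n - u)
    · intro v hv
      simp only [Finset.mem_filter, Finset.mem_range] at hv ⊢
      obtain ⟨hv1, hv2, hv3⟩ := hv
      refine ⟨by omega, ?_, by omega⟩
      exact mod_cancel (by omega : (n - v) + v = x + (n - x)) hv3
    · intro u hu
      simp only [Finset.mem_filter, Finset.mem_range] at hu ⊢
      obtain ⟨hu1, hu2, hu3⟩ := hu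
      refine ⟨by omega, by omega, ?_⟩
      exact mod_cancel (by omega : (n - u) + u = (n - x) + x) hu2
    · intro v hv
      simp only [Finset.mem_filter, Finset.mem_range] at hv
      omega
    · intro u hu
      simp only [Finset.mem_filter, Finset.mem_range] at hu
      omega
  -- Step (ii): split x/e
  have stepB : x / e
      = ((Finset.range x).filter (fun u => u % e = x % e ∧ u ≤ n - t)).card
        + ((Finset.range x).filter (fun u => u % e = x % e ∧ ¬ u ≤ n - t)).card := by
    rw [← G he x]
    rw [show (Finset.range x).filter (fun u => u % e = x % e ∧ u ≤ n - t)
        = ((Finset.range x).filter (fun u => u % e = x % e)).filter (fun u => u ≤ n - t) by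
        rw [Finset.filter_filter]]
    rw [show (Finset.range x).filter (fun u => u % e = x % e ∧ ¬ u ≤ n - t)
        = ((Finset.range x).filter (fun u => u % e = x % e)).filter (fun u => ¬ u ≤ n - t) by
        rw [Finset.filter_filter]]
    exact (Finset.card_filter_add_card_filter_not (fun u => u ≤ n - t)).symm
  -- Step: split cL
  have stepC : cL e (n - t) x
      = ((Finset.range (n - t + 1)).filter (fun u => u % e = x % e ∧ x ≤ u)).card
        + ((Finset.range x).filter (fun u => u % e = x % e ∧ u ≤ n - t)).card := by
    unfold cL
    rw [show (Finset.range (n-t+1)).filter (fun u => u % e = x % e ∧ x ≤ u)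
        = ((Finset.range (n-t+1)).filter (fun u => u % e = x % e)).filter (fun u => x ≤ u) by
        rw [Finset.filter_filter]]
    rw [show (Finset.range x).filter (fun u => u % e = x % e ∧ u ≤ n - t)
        = ((Finset.range (n-t+1)).filter (fun u => u % e = x % e)).filter (fun u => ¬ x ≤ u) by
        rw [Finset.filter_filter]
        ext u
        simp only [Finset.mem_filter, Finset.mem_range]
        constructor
        · rintro ⟨h1, h2, h3⟩; exact ⟨by omega, h2, by omega⟩
        · rintro ⟨h1, h2, h3⟩; exact ⟨by omega, h2, by omega⟩]
    exact (Finset.card_filter_add_card_filter_not (fun u => x ≤ u)).symm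
  -- Step (iii): D' = D via u ↦ u + e
  have stepD : ((Finset.range x).filter (fun u => u % e = x % e ∧ ¬ u ≤ n - t)).card
      = Wc e (n + 1 + e - t) x := by
    unfold Wc
    apply Finset.card_bij' (i := fun u _ => u + e) (j := fun v _ => v - e)
    · intro u hu
      simp only [Finset.mem_filter, Finset.mem_range] at hu ⊢
      obtain ⟨hu1, hu2, hu3⟩ := hu
      have := step_le hu2 hu1
      refine ⟨by omega, by omega, ?_⟩
      rw [Nat.add_mod_right]
      exact hu2
    · intro v hv
      simp only [Finset.mem_filter, Finset.mem_range] at hv ⊢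
      obtain ⟨hv1, hv2, hv3⟩ := hv
      have hve : e + 1 ≤ v := by omega
      have hmod : (v - e) % e = v % e := by
        conv_rhs => rw [show v = (v - e) + e by omega]
        rw [Nat.add_mod_right]
      exact ⟨by omega, by rw [hmod]; exact hv3, by omega⟩
    · intro u hu; omega
    · intro v hv
      simp only [Finset.mem_filter, Finset.mem_range] at hv
      omega
  omega


lemma card_filter_bind (p : ℕ → Prop) [DecidablePred p] (s : Multiset ℕ) (f : ℕ → Multiset ℕ) :
    Multiset.card ((s.bind f).filter p)
      = (s.map (fun a => Multiset.card ((f a).filter p))).sum := by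
  induction s using Multiset.induction with
  | empty => simp
  | cons a s ih => simp [Multiset.cons_bind, Multiset.filter_add, ih]

lemma card_filter_map (p : ℕ → Prop) [DecidablePred p] (f : ℕ → ℕ) (s : Multiset ℕ) :
    Multiset.card ((s.map f).filter p) = Multiset.card (s.filter (fun a => p (f a))) := by
  induction s using Multiset.induction with
  | empty => simp
  | cons a s ih =>
    rw [Multiset.map_cons, Multiset.filter_cons, Multiset.filter_cons, Multiset.card_add,
      Multiset.card_add, ih]
    split <;> simp

lemma finset_card_filter_range (p : ℕ → Prop) [DecidablePred p] (n : ℕ) :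
    Multiset.card ((Multiset.range n).filter p) = ((Finset.range n).filter p).card := rfl

lemma ext_map_eq {e : ℕ} (he : 1 ≤ e) (b : ℕ) :
    (Multiset.range (b / e + 1)).map (fun j => b - j * e)
      = (Multiset.range (b+1)).filter (fun v => v % e = b % e) := by
  have hnd1 : ((Multiset.range (b / e + 1)).map (fun j => b - j * e)).Nodup := by
    apply Multiset.Nodup.map_on _ (Multiset.nodup_range _)
    intro i hi j hj hij
    simp only [Multiset.mem_range] at hi hj
    have hi' : i * e ≤ b := by
      have : i ≤ b / e := by omega
      exact (Nat.le_div_iff_mul_le (by omega)).1 this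
    have hj' : j * e ≤ b := by
      have : j ≤ b / e := by omega
      exact (Nat.le_div_iff_mul_le (by omega)).1 this
    have : i * e = j * e := by omega
    exact Nat.eq_of_mul_eq_mul_right (by omega) this
  have hnd2 : ((Multiset.range (b+1)).filter (fun v => v % e = b % e)).Nodup :=
    Multiset.Nodup.filter _ (Multiset.nodup_range _)
  rw [Multiset.Nodup.ext hnd1 hnd2]
  intro v
  simp only [Multiset.mem_map, Multiset.mem_range, Multiset.mem_filter]
  constructor
  · rintro ⟨j, hj, rfl⟩
    have hj' : j * e ≤ b := by
      have : j ≤ b / e := by omega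
      exact (Nat.le_div_iff_mul_le (by omega)).1 this
    refine ⟨by omega, ?_⟩
    conv_rhs => rw [show b = (b - j * e) + j * e by omega]
    rw [Nat.add_mul_mod_self_right]
  · rintro ⟨hvb, hmod⟩
    have hvb' : v ≤ b := by omega
    have hdl : v / e ≤ b / e := Nat.div_le_div_right hvb'
    have h2 := Nat.div_add_mod b e
    have h3 := Nat.div_add_mod v e
    have key : e * (b / e - v / e) = b - v := by
      rw [Nat.mul_sub]
      omega
    have h6 : b / e - v / e < b / e + 1 := Nat.lt_succ_of_le (Nat.sub_le _ _)
    have h5 : (b / e - v / e) * e = b - v := by rw [Nat.mul_comm]; exact key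
    exact ⟨b / e - v / e, h6, by omega⟩

lemma countGe_eExt {e : ℕ} (he : 1 ≤ e) (t : ℕ) (B : Multiset ℕ) :
    countGe t (eExt e B) = (B.map (fun b => Wc e t b)).sum := by
  unfold countGe eExt
  rw [card_filter_bind]
  congr 1
  apply Multiset.map_congr rfl
  intro b _
  rw [ext_map_eq he b, Multiset.filter_filter, finset_card_filter_range]
  rfl

-- runner counts and cores
lemma runnerCount_eq_count (e d : ℕ) (B : Multiset ℕ) :
    runnerCount e d B = Multiset.count d (B.map (fun x => x % e)) := by
  rw [Multiset.count_map]
  unfold runnerCount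
  congr 1
  apply Multiset.filter_congr
  intro x _
  exact eq_comm

lemma runnerCount_large {e d : ℕ} (he : 1 ≤ e) (hd : e ≤ d) (B : Multiset ℕ) :
    runnerCount e d B = 0 := by
  rw [runnerCount, Multiset.card_eq_zero, Multiset.filter_eq_nil]
  intro a _
  have := Nat.mod_lt a (show 0 < e by omega)
  omega

lemma runnerCount_coreBeta {e d : ℕ} (he : 1 ≤ e) (hd : d < e) (B : Multiset ℕ) :
    runnerCount e d (coreBeta e B) = runnerCount e d B := by
  conv_lhs => rw [runnerCount, coreBeta]
  rw [card_filter_bind]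
  have hcong : ∀ j ∈ Multiset.range e,
      Multiset.card (Multiset.filter (fun b => b % e = d)
        ((Multiset.range (runnerCount e j B)).map (fun i => j + i * e)))
      = if j = d then runnerCount e j B else 0 := by
    intro j hj
    rw [Multiset.mem_range] at hj
    rw [card_filter_map]
    by_cases hjd : j = d
    · subst hjd
      rw [if_pos rfl]
      rw [Multiset.filter_eq_self.2 ?_, Multiset.card_range]
      intro i _
      rw [Nat.add_mul_mod_self_right]
      exact Nat.mod_eq_of_lt hd
    · rw [if_neg hjd, Multiset.card_eq_zero, Multiset.filter_eq_nil]
      intro i _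
      rw [Nat.add_mul_mod_self_right, Nat.mod_eq_of_lt hj]
      exact hjd
  rw [Multiset.map_congr rfl hcong]
  have : ((Multiset.range e).map (fun j => if j = d then runnerCount e j B else 0)).sum
      = ∑ j ∈ Finset.range e, (if j = d then runnerCount e j B else 0) := rfl
  rw [this, Finset.sum_ite_eq' (Finset.range e) d (fun j => runnerCount e j B),
    if_pos (Finset.mem_range.2 hd)]

lemma core_eq_iff {e : ℕ} (he : 1 ≤ e) (B₁ B₂ : Multiset ℕ) :
    coreBeta e B₁ = coreBeta e B₂ ↔ B₁.map (fun x => x % e) = B₂.map (fun x => x % e) := by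
  constructor
  · intro h
    rw [Multiset.ext]
    intro d
    rw [← runnerCount_eq_count, ← runnerCount_eq_count]
    rcases lt_or_ge d e with hd | hd
    · rw [← runnerCount_coreBeta he hd B₁, ← runnerCount_coreBeta he hd B₂, h]
    · rw [runnerCount_large he hd, runnerCount_large he hd]
  · intro h
    unfold coreBeta
    apply Multiset.bind_congr
    intro j _
    rw [show runnerCount e j B₁ = runnerCount e j B₂ by
      rw [runnerCount_eq_count, runnerCount_eq_count, h]]


lemma conj_lt_iff {f : ℕ → ℕ} (hf : IsPartition f) (k i : ℕ) :
    i < conj f k ↔ k + 1 ≤ f i := by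
  classical
  obtain ⟨hmono, N₀, hN₀⟩ := hf
  have hset : {j : ℕ | k + 1 ≤ f j} = ↑((Finset.range N₀).filter (fun j => k + 1 ≤ f j)) := by
    ext j
    simp only [Set.mem_setOf_eq, Finset.coe_filter, Finset.mem_range]
    constructor
    · intro h
      refine ⟨?_, h⟩
      by_contra hc
      push_neg at hc
      have := hN₀ j hc
      omega
    · tauto
  have hcard : conj f k = ((Finset.range N₀).filter (fun j => k + 1 ≤ f j)).card := by
    have h1 : conj f k = Nat.card ↥{j : ℕ | k + 1 ≤ f j} := rfl
    rw [h1, Nat.card_coe_set_eq, hset, Set.ncard_coe_finset]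
  rw [hcard]
  constructor
  · intro h
    by_contra hc
    push_neg at hc
    have hsub : (Finset.range N₀).filter (fun j => k + 1 ≤ f j) ⊆ Finset.range i := by
      intro j hj
      simp only [Finset.mem_filter, Finset.mem_range] at hj ⊢
      by_contra hji
      push_neg at hji
      have := hmono hji
      omega
    have := Finset.card_le_card hsub
    simp only [Finset.card_range] at this
    omega
  · intro h
    have hsub : Finset.range (i+1) ⊆ (Finset.range N₀).filter (fun j => k + 1 ≤ f j) := by
      intro j hj
      simp only [Finset.mem_range] at hj
      simp only [Finset.mem_filter, Finset.mem_range]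
      have hfj : k + 1 ≤ f j := le_trans h (hmono (by omega : j ≤ i))
      refine ⟨?_, hfj⟩
      by_contra hc
      push_neg at hc
      have := hN₀ j hc
      omega
    have := Finset.card_le_card hsub
    simp only [Finset.card_range] at this
    omega

lemma conj_anti {f : ℕ → ℕ} (hf : IsPartition f) ⦃k k' : ℕ⦄ (h : k ≤ k') :
    conj f k' ≤ conj f k := by
  by_contra hc
  push_neg at hc
  have h1 : conj f k < conj f k' := hc
  have h2 := (conj_lt_iff hf k' (conj f k)).1 h1
  have h3 : ¬ (conj f k < conj f k) := lt_irrefl _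
  have h4 := (conj_lt_iff hf k (conj f k))
  omega

lemma conj_partition {f : ℕ → ℕ} (hf : IsPartition f) : IsPartition (conj f) := by
  refine ⟨fun k k' h => conj_anti hf h, f 0, fun k hk => ?_⟩
  by_contra hc
  have h1 : 0 < conj f k := by omega
  have := (conj_lt_iff hf k 0).1 h1
  omega

lemma diag {f : ℕ → ℕ} (hf : IsPartition f) (i k : ℕ) : f i + conj f k ≠ i + k + 1 := by
  rcases lt_or_ge k (f i) with h | h
  · have h2 : i < conj f k := (conj_lt_iff hf k i).2 h
    omega
  · have h2 : conj f k ≤ i := by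
      by_contra hc
      push_neg at hc
      have := (conj_lt_iff hf k i).1 hc
      omega
    omega

lemma betaSet_card (f : ℕ → ℕ) (r : ℕ) : Multiset.card (betaSet f r) = r := by
  simp [betaSet]

lemma betaSet_nodup {f : ℕ → ℕ} (hf : IsPartition f) (r : ℕ) : (betaSet f r).Nodup := by
  apply Multiset.Nodup.map_on _ (Multiset.nodup_range r)
  intro i hi j hj hij
  simp only [Multiset.mem_range] at hi hj
  rcases Nat.lt_trichotomy i j with h | h | h
  · have := hf.1 (le_of_lt h)
    omega
  · exact h
  · have := hf.1 (le_of_lt h)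
    omega

lemma betaSet_lt {f : ℕ → ℕ} {r s x : ℕ} (hf : IsPartition f) (hs : f 0 ≤ s)
    (hx : x ∈ betaSet f r) : x < r + s := by
  obtain ⟨i, hi, rfl⟩ := Multiset.mem_map.1 hx
  rw [Multiset.mem_range] at hi
  have := hf.1 (Nat.zero_le i)
  omega

lemma beta_compl {f : ℕ → ℕ} (hf : IsPartition f) {r s : ℕ} (hs : f 0 ≤ s)
    (hr : conj f 0 ≤ r) :
    betaSet f r + (betaSet (conj f) s).map (fun x => r + s - 1 - x)
      = Multiset.range (r + s) := by
  have hcf := conj_partition hf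
  apply Multiset.eq_of_le_of_card_le
  · -- ≤ via nodup + subset
    have hnd : (betaSet f r + (betaSet (conj f) s).map (fun x => r + s - 1 - x)).Nodup := by
      rw [Multiset.nodup_add]
      refine ⟨betaSet_nodup hf r, ?_, ?_⟩
      · apply Multiset.Nodup.map_on _ (betaSet_nodup hcf s)
        intro x hx y hy hxy
        have hx' := betaSet_lt hcf hr hx
        have hy' := betaSet_lt hcf hr hy
        omega
      · rw [Multiset.disjoint_left]
        intro a ha hamem
        obtain ⟨i, hi, rfl⟩ := Multiset.mem_map.1 ha
        rw [Multiset.mem_range] at hi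
        obtain ⟨x, hx, hax⟩ := Multiset.mem_map.1 hamem
        obtain ⟨k, hk, rfl⟩ := Multiset.mem_map.1 hx
        rw [Multiset.mem_range] at hk
        have hck : conj f k ≤ r := le_trans (conj_anti hf (Nat.zero_le k)) hr
        have hfi : f i ≤ s := le_trans (hf.1 (Nat.zero_le i)) hs
        have hd := diag hf i k
        omega
    rw [Multiset.le_iff_subset hnd]
    intro a ha
    rw [Multiset.mem_range]
    rcases Multiset.mem_add.1 ha with h | h
    · exact betaSet_lt hf hs h
    · obtain ⟨x, hx, rfl⟩ := Multiset.mem_map.1 h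
      have := betaSet_lt hcf hr hx
      omega
  · rw [Multiset.card_range, Multiset.card_add, Multiset.card_map, betaSet_card, betaSet_card]



def cnt (e t : ℕ) (M : Multiset ℕ) : ℕ := (M.map (fun b => Wc e t b)).sum
def Qs (e M : ℕ) (X : Multiset ℕ) : ℕ := (X.map (fun x => cL e M x)).sum
def KsumF (e n t : ℕ) : ℕ := ((Multiset.range (n+1)).map (fun b => Wc e t b)).sum

lemma cnt_large {e t : ℕ} {M : Multiset ℕ} (h : ∀ x ∈ M, x < t) : cnt e t M = 0 := by
  apply Multiset.sum_eq_zero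
  intro y hy
  obtain ⟨x, hx, rfl⟩ := Multiset.mem_map.1 hy
  exact Wc_eq_zero (h x hx)

lemma SmallW {e u : ℕ} (hu : u ≤ e) (x : ℕ) :
    Wc e u x + (if x % e < u then 1 else 0) = Wc e 0 x := by
  classical
  have hsplit := Finset.card_filter_add_card_filter_not
    (s := (Finset.range (x+1)).filter (fun v => v % e = x % e)) (p := fun v => u ≤ v)
  rw [Finset.filter_filter, Finset.filter_filter] at hsplit
  have e0 : Wc e 0 x = ((Finset.range (x+1)).filter (fun v => v % e = x % e)).card := by
    unfold Wc
    congr 1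
    apply Finset.filter_congr
    intro v _
    simp
  have e1 : Wc e u x = ((Finset.range (x+1)).filter (fun a => a % e = x % e ∧ u ≤ a)).card := by
    unfold Wc
    congr 1
    apply Finset.filter_congr
    intro v _
    constructor
    · exact fun h => ⟨h.2, h.1⟩
    · exact fun h => ⟨h.2, h.1⟩
  have e2 : ((Finset.range (x+1)).filter (fun a => a % e = x % e ∧ ¬ u ≤ a)).card
      = if x % e < u then 1 else 0 := by
    by_cases hxu : x % e < u
    · rw [if_pos hxu]
      rw [show (Finset.range (x+1)).filter (fun a => a % e = x % e ∧ ¬ u ≤ a) = {x % e} from ?_]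
      · exact Finset.card_singleton _
      ext v
      simp only [Finset.mem_filter, Finset.mem_range, Finset.mem_singleton, not_le]
      constructor
      · rintro ⟨hv1, hmod, hvu⟩
        have hvlt : v < e := lt_of_lt_of_le hvu hu
        rw [Nat.mod_eq_of_lt hvlt] at hmod
        exact hmod
      · rintro rfl
        have := Nat.mod_le x e
        exact ⟨by omega, Nat.mod_mod_of_dvd x dvd_rfl, hxu⟩
    · rw [if_neg hxu, Finset.card_eq_zero, Finset.filter_eq_empty_iff]
      intro v hv
      rintro ⟨hmod, hvu⟩
      rw [not_le] at hvu
      have hvlt : v < e := lt_of_lt_of_le hvu hu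
      rw [Nat.mod_eq_of_lt hvlt] at hmod
      omega
  rw [e0, ← hsplit, e1, e2]

lemma smallE {e u : ℕ} (hu : u ≤ e) (M : Multiset ℕ) :
    cnt e u M + ((M.map (fun x => x % e)).map (fun d => if d < u then 1 else 0)).sum
      = cnt e 0 M := by
  unfold cnt
  rw [Multiset.map_map, ← Multiset.sum_map_add]
  exact congrArg Multiset.sum (Multiset.map_congr rfl (fun x _ => by
    simpa using SmallW hu x))

lemma Qs_rmap (e M : ℕ) (X : Multiset ℕ) :
    Qs e M X = ((X.map (fun x => x % e)).map (fun d => cL e M d)).sum := by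
  unfold Qs
  rw [Multiset.map_map]
  apply congrArg Multiset.sum
  apply Multiset.map_congr rfl
  intro x _
  show cL e M x = cL e M (x % e)
  unfold cL
  simp [Nat.mod_mod_of_dvd x dvd_rfl]

lemma sigma_eq {e n x : ℕ} (hx : x ≤ n) : (n - x) % e = (n + e - x % e) % e := by
  have h1 := Nat.div_add_mod x e
  have h2 : n + e - x % e = (n - x) + e * (x / e + 1) := by
    rw [Nat.mul_add, Nat.mul_one]
    omega
  rw [h2, Nat.add_mul_mod_self_left]

lemma sigma_invol {e n c : ℕ} (hc : c < e) : (n + e - (n + e - c) % e) % e = c := by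
  set b := n + e - c with hb
  have h1 : b % e ≤ b := Nat.mod_le _ _
  have h2 := Nat.div_add_mod b e
  have h3 : n + e - b % e = c + e * (b / e) := by omega
  rw [h3, Nat.add_mul_mod_self_left, Nat.mod_eq_of_lt hc]

lemma range_rev (n : ℕ) :
    (Multiset.range (n+1)).map (fun x => n - x) = Multiset.range (n+1) := by
  have hnd : ((Multiset.range (n+1)).map (fun x => n - x)).Nodup := by
    apply Multiset.Nodup.map_on _ (Multiset.nodup_range _)
    intro x hx y hy h
    simp only [Multiset.mem_range] at hx hy
    omega
  rw [Multiset.Nodup.ext hnd (Multiset.nodup_range _)]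
  intro a
  simp only [Multiset.mem_map, Multiset.mem_range]
  constructor
  · rintro ⟨x, hx, rfl⟩
    omega
  · intro ha
    exact ⟨n - a, by omega, by omega⟩

lemma compl_swap {n : ℕ} {B B' : Multiset ℕ}
    (hB : B + B'.map (fun x => n - x) = Multiset.range (n+1))
    (hB'le : ∀ x ∈ B', x ≤ n) :
    B' + B.map (fun x => n - x) = Multiset.range (n+1) := by
  have h := congrArg (Multiset.map (fun x => n - x)) hB
  rw [Multiset.map_add, Multiset.map_map, range_rev] at h
  have h2 : B'.map ((fun x => n - x) ∘ (fun x => n - x)) = B' := by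
    rw [show B'.map ((fun x => n - x) ∘ (fun x => n - x)) = B'.map (fun x => x) from
      Multiset.map_congr rfl (fun x hx => by
        have := hB'le x hx
        simp only [Function.comp_apply]
        omega), Multiset.map_id']
  rw [h2] at h
  rw [← h, add_comm]

lemma rmap_bridge {e n : ℕ} (he : 1 ≤ e) {B C B' C' : Multiset ℕ}
    (hB : B + B'.map (fun x => n - x) = Multiset.range (n+1))
    (hC : C + C'.map (fun x => n - x) = Multiset.range (n+1))
    (hB'le : ∀ x ∈ B', x ≤ n) (hC'le : ∀ x ∈ C', x ≤ n) :
    B.map (fun x => x % e) = C.map (fun x => x % e)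
      ↔ B'.map (fun x => x % e) = C'.map (fun x => x % e) := by
  have hmB := congrArg (Multiset.map (fun x => x % e)) hB
  have hmC := congrArg (Multiset.map (fun x => x % e)) hC
  rw [Multiset.map_add, Multiset.map_map] at hmB hmC
  have hσB : B'.map ((fun x => x % e) ∘ (fun x => n - x))
      = (B'.map (fun x => x % e)).map (fun c => (n + e - c) % e) := by
    rw [Multiset.map_map]
    apply Multiset.map_congr rfl
    intro x hx
    simp only [Function.comp_apply]
    exact sigma_eq (hB'le x hx)
  have hσC : C'.map ((fun x => x % e) ∘ (fun x => n - x))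
      = (C'.map (fun x => x % e)).map (fun c => (n + e - c) % e) := by
    rw [Multiset.map_map]
    apply Multiset.map_congr rfl
    intro x hx
    simp only [Function.comp_apply]
    exact sigma_eq (hC'le x hx)
  rw [hσB] at hmB
  rw [hσC] at hmC
  have hinv : ∀ (X : Multiset ℕ),
      ((X.map (fun x => x % e)).map (fun c => (n + e - c) % e)).map (fun c => (n + e - c) % e)
        = X.map (fun x => x % e) := by
    intro X
    rw [Multiset.map_map]
    rw [show ((X.map (fun x => x % e)).map
          ((fun c => (n + e - c) % e) ∘ (fun c => (n + e - c) % e)))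
        = (X.map (fun x => x % e)).map (fun c => c) from Multiset.map_congr rfl ?_,
      Multiset.map_id']
    intro c hc
    obtain ⟨x, hx, rfl⟩ := Multiset.mem_map.1 hc
    simp only [Function.comp_apply]
    exact sigma_invol (Nat.mod_lt x (by omega))
  constructor
  · intro h
    have h1 : (B'.map (fun x => x % e)).map (fun c => (n + e - c) % e)
        = (C'.map (fun x => x % e)).map (fun c => (n + e - c) % e) := by
      have h2 := hmB.trans hmC.symm
      rw [h] at h2
      exact add_left_cancel h2
    have h3 := congrArg (Multiset.map (fun c => (n + e - c) % e)) h1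
    rw [hinv B', hinv C'] at h3
    exact h3
  · intro h
    rw [h] at hmB
    exact add_right_cancel (hmB.trans hmC.symm)

lemma diamond {e n : ℕ} (he : 1 ≤ e) {B B' : Multiset ℕ}
    (hcompl : B + B'.map (fun x => n - x) = Multiset.range (n+1))
    (hle : ∀ x ∈ B', x ≤ n) :
    ∀ t, t ≤ n → cnt e t B + Qs e (n-t) B' + cnt e (n+1+e-t) B' + Multiset.card B'
      = KsumF e n t + cnt e 0 B' := by
  intro t ht
  have h1 : (B.map (fun b => Wc e t b)).sum + (B'.map (fun x => Wc e t (n - x))).sum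
      = KsumF e n t := by
    have h := congrArg (fun M => (M.map (fun b => Wc e t b)).sum) hcompl
    simp only [Multiset.map_add, Multiset.sum_add, Multiset.map_map, Function.comp] at h
    exact h
  have h2 : (B'.map (fun x => Wc e t (n - x) + x / e)).sum
      = (B'.map (fun x => cL e (n-t) x + Wc e (n+1+e-t) x)).sum := by
    apply congrArg Multiset.sum
    apply Multiset.map_congr rfl
    intro x hx
    exact P he (hle x hx) ht
  rw [Multiset.sum_map_add (f := fun x => Wc e t (n - x)) (g := fun x => x / e),
    Multiset.sum_map_add (f := fun x => cL e (n-t) x) (g := fun x => Wc e (n+1+e-t) x)] at h2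
  have h3 : (B'.map (fun x => x / e)).sum + Multiset.card B'
      = (B'.map (fun b => Wc e 0 b)).sum := by
    have h4 : (B'.map (fun b => Wc e 0 b)).sum = (B'.map (fun x => x / e + 1)).sum :=
      congrArg Multiset.sum (Multiset.map_congr rfl (fun x _ => Wc_zero he x))
    rw [h4, Multiset.sum_map_add]
    have h5 : (B'.map (fun _ => (1:ℕ))).sum = Multiset.card B' := by
      simp
    omega
  unfold cnt Qs
  omega

lemma DIR {e n : ℕ} (he : 1 ≤ e) {B C B' C' : Multiset ℕ}
    (hB : B + B'.map (fun x => n - x) = Multiset.range (n+1))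
    (hC : C + C'.map (fun x => n - x) = Multiset.range (n+1))
    (hB'le : ∀ x ∈ B', x ≤ n) (hC'le : ∀ x ∈ C', x ≤ n)
    (hcard' : Multiset.card B' = Multiset.card C')
    (hrm' : B'.map (fun x => x % e) = C'.map (fun x => x % e))
    (h0 : cnt e 0 B = cnt e 0 C) (hle : ∀ t, cnt e t B ≤ cnt e t C) :
    cnt e 0 C' = cnt e 0 B' ∧ ∀ t, cnt e t C' ≤ cnt e t B' := by
  have dB := diamond he hB hB'le
  have dC := diamond he hC hC'le
  have hQ : ∀ M, Qs e M B' = Qs e M C' := fun M => by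
    rw [Qs_rmap, Qs_rmap, hrm']
  have hlB : ∀ t, n < t → cnt e t B' = 0 := fun t ht =>
    cnt_large (fun x hx => lt_of_le_of_lt (hB'le x hx) ht)
  have hlC : ∀ t, n < t → cnt e t C' = 0 := fun t ht =>
    cnt_large (fun x hx => lt_of_le_of_lt (hC'le x hx) ht)
  have h0' : cnt e 0 C' = cnt e 0 B' := by
    have d1 := dB 0 (Nat.zero_le n)
    have d2 := dC 0 (Nat.zero_le n)
    have z1 := hlB (n+1+e-0) (by omega)
    have z2 := hlC (n+1+e-0) (by omega)
    have hq := hQ (n - 0)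
    have hl0 := hle 0
    omega
  refine ⟨h0', fun t => ?_⟩
  rcases le_or_gt t e with hte | hte
  · have s1 := smallE hte B'
    have s2 := smallE hte C'
    rw [hrm'] at s1
    omega
  · rcases le_or_gt t (n+1+e) with htn | htn
    · have ht'n : n + 1 + e - t ≤ n := by omega
      have d1 := dB (n+1+e-t) ht'n
      have d2 := dC (n+1+e-t) ht'n
      rw [show n+1+e-(n+1+e-t) = t by omega] at d1 d2
      have hlt := hle (n+1+e-t)
      have hq := hQ (n - (n+1+e-t))
      omega
    · have := hlC t (by omega)
      omega

end S5

/-- μ ⊵ λ iff λ' ⊵ μ'. -/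
theorem stmt5 (e : ℕ) (he : 2 ≤ e) (f g : ℕ → ℕ)
    (hf : IsPartition f) (hg : IsPartition g) (r s : ℕ)
    (hrf : conj f 0 ≤ r) (hrg : conj g 0 ≤ r) (hsf : f 0 ≤ s) (hsg : g 0 ≤ s) :
    Dominates e r g f ↔ Dominates e s (conj f) (conj g) := by
  classical
  have he1 : 1 ≤ e := by omega
  rcases Nat.eq_zero_or_pos (r + s) with h00 | hpos
  · have hr0 : r = 0 := by omega
    have hs0 : s = 0 := by omega
    subst hr0
    subst hs0
    have hb : ∀ h : ℕ → ℕ, betaSet h 0 = 0 := fun h => by simp [betaSet]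
    have hE : eExt e (0 : Multiset ℕ) = 0 := by simp [eExt]
    constructor <;> intro _ <;>
      exact ⟨by rw [hb, hb], by rw [hb, hb, hE]; exact Multiset.Rel.zero⟩
  · obtain ⟨n, hn1⟩ : ∃ n, r + s = n + 1 := ⟨r + s - 1, by omega⟩
    have hcf := S5.conj_partition hf
    have hcg := S5.conj_partition hg
    have L4f := S5.beta_compl hf hsf hrf
    have L4g := S5.beta_compl hg hsg hrg
    simp only [hn1, Nat.add_sub_cancel] at L4f L4g
    have hBfle : ∀ x ∈ betaSet f r, x ≤ n := fun x hx => by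
      have := S5.betaSet_lt hf hsf hx
      omega
    have hCgle : ∀ x ∈ betaSet g r, x ≤ n := fun x hx => by
      have := S5.betaSet_lt hg hsg hx
      omega
    have hBf'le : ∀ x ∈ betaSet (conj f) s, x ≤ n := fun x hx => by
      have := S5.betaSet_lt hcf hrf hx
      omega
    have hCg'le : ∀ x ∈ betaSet (conj g) s, x ≤ n := fun x hx => by
      have := S5.betaSet_lt hcg hrg hx
      omega
    have hbr := S5.rmap_bridge he1 L4f L4g hBf'le hCg'le
    have convGe : ∀ (B : Multiset ℕ) (t : ℕ), S5.countGe t (eExt e B) = S5.cnt e t B :=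
      fun B t => S5.countGe_eExt he1 t B
    have convCard : ∀ (B : Multiset ℕ), Multiset.card (eExt e B) = S5.cnt e 0 B := fun B => by
      rw [← S5.countGe_zero_card, convGe]
    constructor
    · intro hd
      have hcore := hd.1
      have hdom := hd.2
      have hrm : (betaSet f r).map (fun x => x % e) = (betaSet g r).map (fun x => x % e) :=
        ((S5.core_eq_iff he1 _ _).1 hcore).symm
      have hrm' := hbr.1 hrm
      obtain ⟨hcard, hcnt⟩ := (S5.domMS_iff _ _).1 hdom
      rw [convCard, convCard] at hcard
      have h0 : S5.cnt e 0 (betaSet f r) = S5.cnt e 0 (betaSet g r) := hcard.symm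
      have hle : ∀ t, S5.cnt e t (betaSet f r) ≤ S5.cnt e t (betaSet g r) := fun t => by
        have := hcnt t
        rwa [convGe, convGe] at this
      obtain ⟨h0', hle'⟩ := S5.DIR he1 L4f L4g hBf'le hCg'le
        (by rw [S5.betaSet_card, S5.betaSet_card]) hrm' h0 hle
      refine ⟨(S5.core_eq_iff he1 _ _).2 hrm', (S5.domMS_iff _ _).2 ⟨?_, ?_⟩⟩
      · rw [convCard, convCard]
        exact h0'.symm
      · intro t
        rw [convGe, convGe]
        exact hle' t
    · intro hd
      have hcore' := hd.1
      have hdom' := hd.2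
      have hrm' : (betaSet (conj f) s).map (fun x => x % e)
          = (betaSet (conj g) s).map (fun x => x % e) :=
        (S5.core_eq_iff he1 _ _).1 hcore'
      have hrm := hbr.2 hrm'
      obtain ⟨hcard, hcnt⟩ := (S5.domMS_iff _ _).1 hdom'
      rw [convCard, convCard] at hcard
      have swapf := S5.compl_swap L4f hBf'le
      have swapg := S5.compl_swap L4g hCg'le
      obtain ⟨h0', hle'⟩ := S5.DIR he1 swapg swapf hCgle hBfle
        (by rw [S5.betaSet_card, S5.betaSet_card]) hrm.symm hcard.symm
        (fun t => by
          have := hcnt t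
          rwa [convGe, convGe] at this)
      refine ⟨(S5.core_eq_iff he1 _ _).2 hrm.symm, (S5.domMS_iff _ _).2 ⟨?_, ?_⟩⟩
      · rw [convCard, convCard]
        exact h0'.symm
      · intro t
        rw [convGe, convGe]
        exact hle' t
end

section
/- Suppose e ≥ 3 and λ is a k-empty partition. Then the map ξ ↦ ξ^{-k} (removal of runner d from the e-runner abacus) is a bijection from the set of k-empty partitions with the same e-core as λ to the set of partitions with the same (e-1)-core as λ^{-k}. Moreover, for any k-empty ξ with the same e-core as λ, one has ξ ⊵_e λ if and only if ξ^{-k} ⊵_{e-1} λ^{-k}. -/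
open scoped BigOperators

/-- k-empty: all beads on runner d = (r+k) mod e are as high as possible. -/
def KEmpty (e k r : ℕ) (f : ℕ → ℕ) : Prop :=
  ∀ b ∈ betaSet f r, b % e = (r + k) % e →
    b < (r + k) % e + runnerCount e ((r + k) % e) (betaSet f r) * e

/-- 𝔏_k(λ): number of elements (with multiplicity) of 𝔛^e_r(λ) greater than d + c·e. -/
def Lk (e k r : ℕ) (f : ℕ → ℕ) : ℕ :=
  Multiset.card <| (eExt e (betaSet f r)).filter fun x =>
    (r + k) % e + runnerCount e ((r + k) % e) (betaSet f r) * e < x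
def phi (e d z : ℕ) : ℕ := z - (z + e - d) / e

def removeRunnerB (e d : ℕ) (B : Multiset ℕ) : Multiset ℕ :=
  (B.filter fun b => ¬ b % e = d).map (phi e d)

/-- the partition whose beta-set is the multiset C (sorted descending, subtract staircase). -/
def partOfBeta (C : Multiset ℕ) : ℕ → ℕ := fun i =>
  ((C.sort (· ≤ ·)).reverse.getD i 0) - (Multiset.card C - 1 - i)

/-- λ^{-k}: remove runner d = (r+k) mod e from the r-bead abacus display of λ. -/
def removeRunnerP (e k r : ℕ) (f : ℕ → ℕ) : ℕ → ℕ :=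
  partOfBeta (removeRunnerB e ((r + k) % e) (betaSet f r))

/-!
Off runner `d`, the map `φ_d` is an order-preserving bijection onto `ℕ` that sends runner `j`
of the `e`-abacus to a runner of the `(e-1)`-abacus, row for row, and satisfies
`φ_d (z - t e) = φ_d z - t (e-1)`. Hence it carries the runner counts, and the part of the
`e`-extension off runner `d`, to the runner counts and the `(e-1)`-extension of the display with
runner `d` removed. For a `k`-empty partition the beads on runner `d` are pushed up, so they are
determined by their number, which the `e`-core fixes; this makes runner removal injective, and
inserting runner `d` with that many beads pushed up inverts it. For dominance, the `e`-extensions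
of two such partitions have the same part on runner `d`, which cancels from the comparison.
-/
section Phi

variable {e d : ℕ}

lemma phi_of_mod_ne (hd : d < e) {z : ℕ} (hz : z % e ≠ d) :
    phi e d z = (e - 1) * (z / e) + (if z % e < d then z % e else z % e - 1) := by
  have hz' := Nat.div_add_mod z e
  have hlt := Nat.mod_lt z (show 0 < e by omega)
  have hle := Nat.le_mul_of_pos_left (z / e) (show 0 < e by omega)
  rw [phi, Nat.sub_one_mul, show z + e - d = (z % e + e - d) + e * (z / e) by omega,
    Nat.add_mul_div_left _ _ (by omega)]
  split_ifs with h
  · rw [Nat.div_eq_of_lt (by omega : z % e + e - d < e)]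
    omega
  · rw [Nat.div_eq_of_lt_le (k := 1) (by omega) (by omega)]
    omega

lemma relabelled_runner_lt (hd : d < e) {j : ℕ} (hj : j < e) (hjd : j ≠ d) :
    (if j < d then j else j - 1) < e - 1 := by
  split_ifs <;> omega

lemma phi_div (hd : d < e) {z : ℕ} (hz : z % e ≠ d) : phi e d z / (e - 1) = z / e := by
  have h := relabelled_runner_lt hd (Nat.mod_lt z (by omega)) hz
  rw [phi_of_mod_ne hd hz, Nat.mul_add_div (by omega), Nat.div_eq_of_lt h, add_zero]

lemma phi_mod (hd : d < e) {z : ℕ} (hz : z % e ≠ d) :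
    phi e d z % (e - 1) = if z % e < d then z % e else z % e - 1 := by
  rw [phi_of_mod_ne hd hz, Nat.mul_add_mod,
    Nat.mod_eq_of_lt (relabelled_runner_lt hd (Nat.mod_lt z (by omega)) hz)]

lemma strictMonoOn_phi (hd : d < e) : StrictMonoOn (phi e d) {z | z % e ≠ d} := by
  intro a (ha : a % e ≠ d) b (hb : b % e ≠ d) hab
  have hra := relabelled_runner_lt hd (Nat.mod_lt a (by omega)) ha
  rw [phi_of_mod_ne hd ha, phi_of_mod_ne hd hb]
  rcases (Nat.div_le_div_right (c := e) hab.le).lt_or_eq with hlt | heq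
  · have := Nat.mul_le_mul_left (e - 1) hlt
    rw [Nat.mul_succ] at this
    omega
  · have ha' := Nat.div_add_mod a e
    have hb' := Nat.div_add_mod b e
    rw [heq] at ha' ⊢
    split_ifs at hra ⊢ <;> omega

lemma phi_sub_mul (hd : d < e) {z t : ℕ} (hz : z % e ≠ d) (ht : t ≤ z / e) :
    phi e d (z - t * e) = phi e d z - t * (e - 1) := by
  have hz' := Nat.div_add_mod z e
  have hte : t * e ≤ z := (Nat.le_div_iff_mul_le (by omega)).mp ht
  have hmod : (z - t * e) % e = z % e := by
    rw [mul_comm] at hte ⊢; exact Nat.sub_mul_mod hte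
  have hdiv : (z - t * e) / e = z / e - t := by rw [mul_comm]; exact Nat.sub_mul_div z e t
  rw [phi_of_mod_ne hd hz, phi_of_mod_ne hd (hmod ▸ hz), hmod, hdiv, Nat.mul_sub, mul_comm t]
  have := Nat.mul_le_mul_left (e - 1) ht
  omega

end Phi

def phiInv (e d y : ℕ) : ℕ :=
  e * (y / (e - 1)) + if y % (e - 1) < d then y % (e - 1) else y % (e - 1) + 1

section PhiInv

variable {e d : ℕ}

lemma phiInv_mod (he : 2 ≤ e) (hd : d < e) (y : ℕ) :
    phiInv e d y % e = if y % (e - 1) < d then y % (e - 1) else y % (e - 1) + 1 := by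
  have := Nat.mod_lt y (show 0 < e - 1 by omega)
  rw [phiInv, Nat.mul_add_mod, Nat.mod_eq_of_lt (by split_ifs <;> omega)]

lemma phiInv_mod_ne (he : 2 ≤ e) (hd : d < e) (y : ℕ) : phiInv e d y % e ≠ d := by
  rw [phiInv_mod he hd]
  split_ifs <;> omega

lemma phi_phiInv (he : 2 ≤ e) (hd : d < e) (y : ℕ) : phi e d (phiInv e d y) = y := by
  have hy := Nat.div_add_mod y (e - 1)
  have hdiv : phiInv e d y / e = y / (e - 1) := by
    have := Nat.mod_lt y (show 0 < e - 1 by omega)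
    have h : (if y % (e - 1) < d then y % (e - 1) else y % (e - 1) + 1) < e := by
      split_ifs <;> omega
    rw [phiInv, Nat.mul_add_div (by omega), Nat.div_eq_of_lt h, add_zero]
  rw [phi_of_mod_ne hd (phiInv_mod_ne he hd y), hdiv, phiInv_mod he hd]
  split_ifs <;> omega

lemma phiInv_phi (he : 2 ≤ e) (hd : d < e) {z : ℕ} (hz : z % e ≠ d) :
    phiInv e d (phi e d z) = z :=
  (strictMonoOn_phi hd).injOn (phiInv_mod_ne he hd _) hz (phi_phiInv he hd _)

end PhiInv

section BetaSet

lemma List.getElem_add_sub_le_of_pairwise_gt {L : List ℕ} (hL : L.Pairwise (· > ·)) {i j : ℕ}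
    (hij : i ≤ j) (hj : j < L.length) : L[j] + (j - i) ≤ L[i] := by
  induction j with
  | zero => simp [Nat.le_zero.mp hij]
  | succ j ih =>
    rcases hij.eq_or_lt with rfl | hlt
    · simp
    · have hstep : L[j + 1] < L[j] :=
        List.pairwise_iff_getElem.mp hL j (j + 1) (by omega) hj (by omega)
      have := ih (by omega) (by omega)
      omega

lemma partOfBeta_coe {L : List ℕ} (hL : L.Pairwise (· > ·)) (i : ℕ) :
    partOfBeta L i = L.getD i 0 - (L.length - 1 - i) := by
  have hsort : (L : Multiset ℕ).sort (· ≤ ·) = L.reverse := by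
    rw [← Multiset.coe_reverse, Multiset.coe_sort]
    exact List.mergeSort_eq_self _ (List.pairwise_reverse.mpr (hL.imp le_of_lt))
  rw [partOfBeta, hsort, List.reverse_reverse, Multiset.coe_card]

lemma isPartition_partOfBeta_coe {L : List ℕ} (hL : L.Pairwise (· > ·)) :
    IsPartition (partOfBeta L) := by
  refine ⟨fun i j hij => ?_, L.length, fun i hi => ?_⟩
  · rw [partOfBeta_coe hL, partOfBeta_coe hL]
    by_cases hj : j < L.length
    · rw [List.getD_eq_getElem _ _ hj, List.getD_eq_getElem _ _ (by omega)]
      have := List.getElem_add_sub_le_of_pairwise_gt hL hij hj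
      omega
    · rw [List.getD_eq_default _ _ (by omega)]
      omega
  · rw [partOfBeta_coe hL, List.getD_eq_default _ _ hi]
    omega

lemma betaSet_partOfBeta_coe {L : List ℕ} (hL : L.Pairwise (· > ·)) :
    betaSet (partOfBeta L) L.length = L := by
  rw [betaSet, Multiset.range, Multiset.map_coe]
  congr 1
  refine List.ext_getElem (by simp) fun i h₁ _ => ?_
  rw [List.length_map, List.length_range] at h₁
  rw [List.getElem_map, List.getElem_range, partOfBeta_coe hL, List.getD_eq_getElem _ _ h₁]
  have := List.getElem_add_sub_le_of_pairwise_gt hL (Nat.le_sub_one_of_lt h₁)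
    (by omega : L.length - 1 < L.length)
  omega

lemma exists_pairwise_gt_of_nodup {C : Multiset ℕ} (hC : C.Nodup) :
    ∃ L : List ℕ, L.Pairwise (· > ·) ∧ (L : Multiset ℕ) = C := by
  refine ⟨C.sort (· ≥ ·), ?_, Multiset.sort_eq _ _⟩
  have hnd : (C.sort (· ≥ ·)).Nodup := by rwa [← Multiset.coe_nodup, Multiset.sort_eq]
  exact ((Multiset.pairwise_sort C _).and hnd).imp fun h => lt_of_le_of_ne h.1 h.2.symm

lemma isPartition_partOfBeta {C : Multiset ℕ} (hC : C.Nodup) : IsPartition (partOfBeta C) := by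
  obtain ⟨L, hL, rfl⟩ := exists_pairwise_gt_of_nodup hC
  exact isPartition_partOfBeta_coe hL

lemma betaSet_partOfBeta {C : Multiset ℕ} (hC : C.Nodup) :
    betaSet (partOfBeta C) (Multiset.card C) = C := by
  obtain ⟨L, hL, rfl⟩ := exists_pairwise_gt_of_nodup hC
  exact betaSet_partOfBeta_coe hL

lemma partOfBeta_eq_zero {C : Multiset ℕ} {i : ℕ} (hi : Multiset.card C ≤ i) :
    partOfBeta C i = 0 := by
  rw [partOfBeta, List.getD_eq_default _ _ (by simpa using hi)]
  omega

lemma conj_zero_eq_ncard (f : ℕ → ℕ) : conj f 0 = {j | 0 < f j}.ncard :=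
  Nat.card_coe_set_eq _

lemma conj_zero_le_of_eq_zero {f : ℕ → ℕ} {n : ℕ} (h : ∀ i, n ≤ i → f i = 0) :
    conj f 0 ≤ n := by
  have hsub : {j | 0 < f j} ⊆ (Finset.range n : Set ℕ) := fun j hj => by
    by_contra hjn
    simp_all
  rw [conj_zero_eq_ncard, ← Finset.card_range n, ← Set.ncard_coe_finset]
  exact Set.ncard_le_ncard hsub

lemma IsPartition.eq_zero_of_conj_zero_le {f : ℕ → ℕ} (hf : IsPartition f) {n : ℕ}
    (hn : conj f 0 ≤ n) {i : ℕ} (hi : n ≤ i) : f i = 0 := by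
  by_contra hfi
  obtain ⟨N, hN⟩ := hf.2
  have hfin : {j | 0 < f j}.Finite :=
    (Set.finite_Iio N).subset fun j hj => by by_contra h; simp_all
  have hsub : (Finset.range (n + 1) : Set ℕ) ⊆ {j | 0 < f j} := fun j hj => by
    have := hf.1 (show j ≤ i by simp at hj; omega)
    show 0 < f j
    omega
  have := Set.ncard_le_ncard hsub hfin
  rw [Set.ncard_coe_finset, Finset.card_range, ← conj_zero_eq_ncard] at this
  omega

lemma betaSet_eq_coe (f : ℕ → ℕ) (r : ℕ) :
    betaSet f r = ((List.range r).map fun i => f i + (r - 1 - i) : List ℕ) := rfl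

lemma IsPartition.pairwise_gt_betaNumbers {f : ℕ → ℕ} (hf : IsPartition f) (r : ℕ) :
    ((List.range r).map fun i => f i + (r - 1 - i)).Pairwise (· > ·) := by
  refine List.pairwise_map.mpr (List.pairwise_lt_range.imp_of_mem fun {i j} _ hj hij => ?_)
  have := hf.1 hij.le
  have := List.mem_range.mp hj
  omega

lemma nodup_betaSet {f : ℕ → ℕ} (hf : IsPartition f) (r : ℕ) : (betaSet f r).Nodup :=
  Multiset.coe_nodup.mpr ((hf.pairwise_gt_betaNumbers r).imp ne_of_gt)

lemma card_betaSet (f : ℕ → ℕ) (r : ℕ) : Multiset.card (betaSet f r) = r := by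
  simp [betaSet]

lemma partOfBeta_betaSet {f : ℕ → ℕ} (hf : IsPartition f) {r : ℕ} (hr : conj f 0 ≤ r) :
    partOfBeta (betaSet f r) = f := by
  funext i
  rw [betaSet_eq_coe, partOfBeta_coe (hf.pairwise_gt_betaNumbers r), List.length_map,
    List.length_range]
  by_cases hi : i < r
  · rw [List.getD_eq_getElem _ _ (by simpa using hi)]
    simp
  · rw [List.getD_eq_default _ _ (by simp; omega), hf.eq_zero_of_conj_zero_le hr (by omega),
      Nat.zero_sub]

section Restrict

variable (r : ℕ) (P : Multiset ℕ → Prop)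

lemma invOn_partOfBeta_betaSet :
    Set.InvOn partOfBeta (betaSet · r) {f | IsPartition f ∧ conj f 0 ≤ r ∧ P (betaSet f r)}
      {C | C.Nodup ∧ Multiset.card C = r ∧ P C} := by
  refine ⟨fun f ⟨hf, hr, _⟩ => partOfBeta_betaSet hf hr, ?_⟩
  rintro C ⟨hC, rfl, _⟩
  exact betaSet_partOfBeta hC

lemma bijOn_betaSet :
    Set.BijOn (betaSet · r) {f | IsPartition f ∧ conj f 0 ≤ r ∧ P (betaSet f r)}
      {C | C.Nodup ∧ Multiset.card C = r ∧ P C} := by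
  refine (invOn_partOfBeta_betaSet r P).bijOn ?_ ?_
  · exact fun f ⟨hf, _, hP⟩ => ⟨nodup_betaSet hf r, card_betaSet f r, hP⟩
  · rintro C ⟨hC, rfl, hP⟩
    exact ⟨isPartition_partOfBeta hC, conj_zero_le_of_eq_zero fun _ => partOfBeta_eq_zero,
      by rwa [betaSet_partOfBeta hC]⟩

lemma bijOn_partOfBeta :
    Set.BijOn partOfBeta {C | C.Nodup ∧ Multiset.card C = r ∧ P C}
      {f | IsPartition f ∧ conj f 0 ≤ r ∧ P (betaSet f r)} :=
  (bijOn_betaSet r P).symm (invOn_partOfBeta_betaSet r P).symm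

end Restrict

end BetaSet

namespace Multiset

variable {α : Type*} {r : α → α → Prop} [IsTrans α r]

theorem Rel.of_cons_cons {a : α} {s t : Multiset α} (h : Rel r (a ::ₘ s) (a ::ₘ t)) :
    Rel r s t := by
  obtain ⟨b, t', hab, hst', heq⟩ := rel_cons_left.mp h
  rcases cons_eq_cons.mp heq with ⟨rfl, rfl⟩ | ⟨-, u, rfl, rfl⟩
  · exact hst'
  · obtain ⟨c, s', hca, hs'u, rfl⟩ := rel_cons_right.mp hst'
    exact hs'u.cons (_root_.trans hca hab)

theorem Rel.of_add_add_left {s t u : Multiset α} (h : Rel r (u + s) (u + t)) : Rel r s t := by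
  induction u using Multiset.induction with
  | empty => simpa using h
  | cons a u ih =>
    rw [cons_add, cons_add] at h
    exact ih h.of_cons_cons

end Multiset

lemma domMS_add_left_iff (D I J : Multiset ℕ) : DomMS (D + I) (D + J) ↔ DomMS I J :=
  ⟨Multiset.Rel.of_add_add_left,
    (Multiset.rel_refl_of_refl_on (r := fun a b => b ≤ a) fun _ _ => le_rfl).add⟩

lemma domMS_map_iff {f : ℕ → ℕ} {S : Set ℕ} (hf : StrictMonoOn f S) {I J : Multiset ℕ}
    (hI : ∀ x ∈ I, x ∈ S) (hJ : ∀ x ∈ J, x ∈ S) :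
    DomMS (I.map f) (J.map f) ↔ DomMS I J := by
  rw [DomMS, Multiset.rel_map]
  exact ⟨fun h => h.mono fun a ha b hb => (hf.le_iff_le (hJ b hb) (hI a ha)).mp,
    fun h => h.mono fun a ha b hb => (hf.le_iff_le (hJ b hb) (hI a ha)).mpr⟩

section Core

variable {e : ℕ}

lemma runnerCount_coreBeta (B : Multiset ℕ) {j : ℕ} (hj : j < e) :
    runnerCount e j (coreBeta e B) = runnerCount e j B := by
  have hrun : ∀ i ∈ Multiset.range e, ((Multiset.range (runnerCount e i B)).map
      fun t => i + t * e).filter (· % e = j) =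
      if i = j then (Multiset.range (runnerCount e i B)).map fun t => i + t * e else 0 := by
    intro i hi
    have hmod : ∀ t, (i + t * e) % e = i := fun t => by
      rw [Nat.add_mul_mod_self_right, Nat.mod_eq_of_lt (Multiset.mem_range.mp hi)]
    split_ifs with hij
    · exact Multiset.filter_eq_self.mpr fun x hx => by
        obtain ⟨t, -, rfl⟩ := Multiset.mem_map.mp hx; rw [hmod, hij]
    · exact Multiset.filter_eq_nil.mpr fun x hx => by
        obtain ⟨t, -, rfl⟩ := Multiset.mem_map.mp hx; rw [hmod]; exact hij
  rw [runnerCount, coreBeta, Multiset.filter_bind, Multiset.bind_congr hrun,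
    ← Multiset.bind_filter]
  simp [Multiset.filter_eq' (Multiset.range e) j, runnerCount, Multiset.count_eq_one_of_mem
    (Multiset.nodup_range e) (Multiset.mem_range.mpr hj)]

lemma coreBeta_eq_iff {B₁ B₂ : Multiset ℕ} :
    coreBeta e B₁ = coreBeta e B₂ ↔ ∀ j < e, runnerCount e j B₁ = runnerCount e j B₂ := by
  refine ⟨fun h j hj => ?_, fun h => ?_⟩
  · rw [← runnerCount_coreBeta B₁ hj, ← runnerCount_coreBeta B₂ hj, h]
  · exact Multiset.bind_congr fun j hj => by rw [h j (Multiset.mem_range.mp hj)]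

end Core

lemma filter_eExt {e : ℕ} (p : ℕ → Prop) [DecidablePred p]
    (hp : ∀ x y, x % e = y % e → (p x ↔ p y)) (B : Multiset ℕ) :
    (eExt e B).filter p = eExt e (B.filter p) := by
  have hchain : ∀ b ∈ B, ((Multiset.range (b / e + 1)).map fun j => b - j * e).filter p =
      if p b then (Multiset.range (b / e + 1)).map (fun j => b - j * e) else 0 := by
    intro b _
    have hmod : ∀ j ∈ Multiset.range (b / e + 1), p (b - j * e) ↔ p b := fun j hj => by
      have hje : e * j ≤ b := by
        have := Nat.div_mul_le_self b e
        have := Nat.mul_le_mul_right e (Nat.lt_succ_iff.mp (Multiset.mem_range.mp hj))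
        rw [mul_comm] at this
        omega
      exact hp _ _ (by rw [mul_comm]; exact Nat.sub_mul_mod hje)
    split_ifs with hb
    · exact Multiset.filter_eq_self.mpr fun x hx => by
        obtain ⟨j, hj, rfl⟩ := Multiset.mem_map.mp hx; exact (hmod j hj).mpr hb
    · exact Multiset.filter_eq_nil.mpr fun x hx => by
        obtain ⟨j, hj, rfl⟩ := Multiset.mem_map.mp hx; exact fun h => hb ((hmod j hj).mp h)
  rw [eExt, eExt, Multiset.filter_bind, Multiset.bind_congr hchain, Multiset.bind_filter]

section RemoveRunner

variable {e d : ℕ}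

lemma runnerCount_removeRunnerB (hd : d < e) (B : Multiset ℕ) (j : ℕ) :
    runnerCount (e - 1) j (removeRunnerB e d B) =
      runnerCount e (if j < d then j else j + 1) B := by
  rw [runnerCount, runnerCount, removeRunnerB, Multiset.filter_map, Multiset.card_map,
    Multiset.filter_filter]
  congr 1
  refine Multiset.filter_congr fun b _ => ?_
  have := Nat.mod_lt b (show 0 < e by omega)
  by_cases hbd : b % e = d
  · simp only [hbd, not_true_eq_false, and_false, false_iff]
    split_ifs <;> omega
  · simp only [Function.comp_apply, phi_mod hd hbd, hbd, not_false_eq_true, and_true]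
    split_ifs <;> omega

lemma coreBeta_removeRunnerB_eq_iff (hd : d < e) {B₁ B₂ : Multiset ℕ}
    (h : runnerCount e d B₁ = runnerCount e d B₂) :
    coreBeta (e - 1) (removeRunnerB e d B₁) = coreBeta (e - 1) (removeRunnerB e d B₂) ↔
      coreBeta e B₁ = coreBeta e B₂ := by
  simp only [coreBeta_eq_iff]
  refine ⟨fun h' j hj => ?_, fun h' j hj => ?_⟩
  · rcases lt_trichotomy j d with hjd | rfl | hjd
    · simpa [runnerCount_removeRunnerB hd _ j, hjd] using h' j (by omega)
    · exact h
    · have := h' (j - 1) (by omega)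
      rw [runnerCount_removeRunnerB hd, runnerCount_removeRunnerB hd,
        if_neg (by omega), Nat.sub_add_cancel (by omega)] at this
      exact this
  · rw [runnerCount_removeRunnerB hd, runnerCount_removeRunnerB hd]
    exact h' _ (by split_ifs <;> omega)

lemma eExt_removeRunnerB (hd : d < e) (B : Multiset ℕ) :
    eExt (e - 1) (removeRunnerB e d B) = ((eExt e B).filter (¬ · % e = d)).map (phi e d) := by
  rw [filter_eExt _ (fun x y h => by rw [h]), removeRunnerB, eExt, eExt, Multiset.bind_map,
    Multiset.map_bind]
  refine Multiset.bind_congr fun b hb => ?_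
  have hbd : b % e ≠ d := (Multiset.mem_filter.mp hb).2
  rw [phi_div hd hbd, Multiset.map_map]
  exact Multiset.map_congr rfl fun t ht =>
    (phi_sub_mul hd hbd (Nat.lt_succ_iff.mp (Multiset.mem_range.mp ht))).symm

lemma domMS_eExt_removeRunnerB_iff (hd : d < e) {B₁ B₂ : Multiset ℕ}
    (h : B₁.filter (· % e = d) = B₂.filter (· % e = d)) :
    DomMS (eExt (e - 1) (removeRunnerB e d B₁)) (eExt (e - 1) (removeRunnerB e d B₂)) ↔
      DomMS (eExt e B₁) (eExt e B₂) := by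
  have hrunner : (eExt e B₁).filter (· % e = d) = (eExt e B₂).filter (· % e = d) := by
    rw [filter_eExt _ (fun x y h => by rw [h]), filter_eExt _ (fun x y h => by rw [h]), h]
  rw [eExt_removeRunnerB hd, eExt_removeRunnerB hd,
    domMS_map_iff (strictMonoOn_phi hd) (I := (eExt e B₁).filter (¬ · % e = d))
      (J := (eExt e B₂).filter (¬ · % e = d)) (fun x hx => (Multiset.mem_filter.mp hx).2)
      (fun x hx => (Multiset.mem_filter.mp hx).2),
    ← domMS_add_left_iff ((eExt e B₁).filter (· % e = d)), Multiset.filter_add_not, hrunner,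
    Multiset.filter_add_not]

end RemoveRunner

section Flush

variable {e d : ℕ}

-- `KEmpty e k r f` unfolds to `IsFlushRunner e ((r + k) % e) (betaSet f r)`.
def IsFlushRunner (e d : ℕ) (B : Multiset ℕ) : Prop :=
  ∀ b ∈ B, b % e = d → b < d + runnerCount e d B * e

def topBeads (e d c : ℕ) : Multiset ℕ := (Multiset.range c).map fun i => d + i * e

lemma mod_eq_of_mem_topBeads (hd : d < e) {c x : ℕ} (hx : x ∈ topBeads e d c) : x % e = d := by
  obtain ⟨i, -, rfl⟩ := Multiset.mem_map.mp hx
  rw [Nat.add_mul_mod_self_right, Nat.mod_eq_of_lt hd]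

lemma nodup_topBeads (he : 0 < e) (c : ℕ) : (topBeads e d c).Nodup :=
  (Multiset.nodup_range c).map fun i j h => Nat.eq_of_mul_eq_mul_right he (by omega)

lemma filter_eq_topBeads {B : Multiset ℕ} (hB : B.Nodup) (h : IsFlushRunner e d B) :
    B.filter (· % e = d) = topBeads e d (runnerCount e d B) := by
  refine Multiset.eq_of_le_of_card_le ?_ (by simp [topBeads, runnerCount])
  refine (Multiset.le_iff_subset (hB.filter _)).mpr fun x hx => ?_
  obtain ⟨hxB, hxd⟩ := Multiset.mem_filter.mp hx
  have hlt := h x hxB hxd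
  have hx' := Nat.div_add_mod x e
  refine Multiset.mem_map.mpr ⟨x / e, Multiset.mem_range.mpr ?_, by rw [← hxd]; linarith⟩
  by_contra hc
  have := Nat.mul_le_mul_right e (not_lt.mp hc)
  rw [mul_comm] at hx'
  omega

lemma nodup_removeRunnerB (hd : d < e) {B : Multiset ℕ} (hB : B.Nodup) :
    (removeRunnerB e d B).Nodup :=
  (hB.filter _).map_on fun _ hx _ hy => (strictMonoOn_phi hd).injOn
    (Multiset.mem_filter.mp hx).2 (Multiset.mem_filter.mp hy).2

lemma card_removeRunnerB (B : Multiset ℕ) :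
    Multiset.card (removeRunnerB e d B) = Multiset.card B - runnerCount e d B := by
  rw [removeRunnerB, Multiset.card_map, runnerCount, ← Multiset.filter_add_not (· % e = d) B,
    Multiset.card_add, Multiset.filter_add_not]
  omega

lemma filter_add_map_phiInv_removeRunnerB (he : 2 ≤ e) (hd : d < e) (B : Multiset ℕ) :
    B.filter (· % e = d) + (removeRunnerB e d B).map (phiInv e d) = B := by
  rw [removeRunnerB, Multiset.map_map,
    Multiset.map_congr (f := phiInv e d ∘ phi e d) (g := id) rfl fun x hx =>
      phiInv_phi he hd (Multiset.mem_filter.mp hx).2,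
    Multiset.map_id, Multiset.filter_add_not]

lemma filter_topBeads_add (he : 2 ≤ e) (hd : d < e) (c : ℕ) (C : Multiset ℕ) :
    (topBeads e d c + C.map (phiInv e d)).filter (· % e = d) = topBeads e d c := by
  rw [Multiset.filter_add, Multiset.filter_eq_self.mpr fun x hx => mod_eq_of_mem_topBeads hd hx,
    Multiset.filter_eq_nil.mpr, add_zero]
  rintro _ hx
  obtain ⟨y, -, rfl⟩ := Multiset.mem_map.mp hx
  exact phiInv_mod_ne he hd y

lemma removeRunnerB_topBeads_add (he : 2 ≤ e) (hd : d < e) (c : ℕ) (C : Multiset ℕ) :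
    removeRunnerB e d (topBeads e d c + C.map (phiInv e d)) = C := by
  rw [removeRunnerB, Multiset.filter_add,
    Multiset.filter_eq_nil.mpr fun x hx h => h (mod_eq_of_mem_topBeads hd hx),
    Multiset.filter_eq_self.mpr fun x hx => ?_, zero_add, Multiset.map_map,
    Multiset.map_congr (f := phi e d ∘ phiInv e d) (g := id) rfl fun y _ => phi_phiInv he hd y,
    Multiset.map_id]
  obtain ⟨y, -, rfl⟩ := Multiset.mem_map.mp hx
  exact phiInv_mod_ne he hd y

end Flush

section Bijection

variable {e d : ℕ}

theorem bijOn_removeRunnerB (he : 2 ≤ e) (hd : d < e) {r : ℕ} {B₀ : Multiset ℕ}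
    (hr : runnerCount e d B₀ ≤ r) :
    Set.BijOn (removeRunnerB e d)
      {B | B.Nodup ∧ Multiset.card B = r ∧ (IsFlushRunner e d B ∧ coreBeta e B = coreBeta e B₀)}
      {C | C.Nodup ∧ Multiset.card C = r - runnerCount e d B₀ ∧
        coreBeta (e - 1) C = coreBeta (e - 1) (removeRunnerB e d B₀)} := by
  have hcount {B : Multiset ℕ} (h : coreBeta e B = coreBeta e B₀) :
      runnerCount e d B = runnerCount e d B₀ :=
    coreBeta_eq_iff.mp h d hd
  refine ⟨?_, ?_, ?_⟩
  · rintro B ⟨hB, rfl, -, hcore⟩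
    exact ⟨nodup_removeRunnerB hd hB, by rw [card_removeRunnerB, hcount hcore],
      (coreBeta_removeRunnerB_eq_iff hd (hcount hcore)).mpr hcore⟩
  · rintro B₁ ⟨hB₁, -, hf₁, hc₁⟩ B₂ ⟨hB₂, -, hf₂, hc₂⟩ heq
    rw [← filter_add_map_phiInv_removeRunnerB he hd B₁,
      ← filter_add_map_phiInv_removeRunnerB he hd B₂, filter_eq_topBeads hB₁ hf₁,
      filter_eq_topBeads hB₂ hf₂, hcount hc₁, hcount hc₂, heq]
  · rintro C ⟨hC, hcard, hcore⟩
    set c := runnerCount e d B₀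
    have hfilter := filter_topBeads_add he hd c C
    have hremove := removeRunnerB_topBeads_add he hd c C
    have hcountB : runnerCount e d (topBeads e d c + C.map (phiInv e d)) = c := by
      rw [runnerCount, hfilter, topBeads, Multiset.card_map, Multiset.card_range]
    refine ⟨topBeads e d c + C.map (phiInv e d), ⟨?_, ?_, ?_, ?_⟩, hremove⟩
    · refine Multiset.nodup_add.mpr ⟨nodup_topBeads (by omega) c, ?_, ?_⟩
      · exact hC.map_on fun x _ y _ h => by
          rw [← phi_phiInv he hd x, ← phi_phiInv he hd y, h]
      · refine Multiset.disjoint_left.mpr fun hx hy => ?_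
        obtain ⟨y, -, rfl⟩ := Multiset.mem_map.mp hy
        exact phiInv_mod_ne he hd y (mod_eq_of_mem_topBeads hd hx)
    · rw [Multiset.card_add, Multiset.card_map, hcard, topBeads, Multiset.card_map,
        Multiset.card_range]
      omega
    · intro b hb hbd
      rw [hcountB]
      have : b ∈ topBeads e d c := hfilter ▸ Multiset.mem_filter.mpr ⟨hb, hbd⟩
      obtain ⟨i, hi, rfl⟩ := Multiset.mem_map.mp this
      have := Nat.mul_lt_mul_of_pos_right (Multiset.mem_range.mp hi) (show 0 < e by omega)
      omega
    · rw [← coreBeta_removeRunnerB_eq_iff hd hcountB, hremove]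
      exact hcore

theorem dominance_removeRunnerB_iff (hd : d < e) {B₁ B₂ : Multiset ℕ}
    (hB₁ : B₁.Nodup) (hB₂ : B₂.Nodup) (hf₁ : IsFlushRunner e d B₁) (hf₂ : IsFlushRunner e d B₂)
    (hc : runnerCount e d B₁ = runnerCount e d B₂) :
    (coreBeta (e - 1) (removeRunnerB e d B₁) = coreBeta (e - 1) (removeRunnerB e d B₂) ∧
        DomMS (eExt (e - 1) (removeRunnerB e d B₁)) (eExt (e - 1) (removeRunnerB e d B₂))) ↔
      (coreBeta e B₁ = coreBeta e B₂ ∧ DomMS (eExt e B₁) (eExt e B₂)) :=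
  and_congr (coreBeta_removeRunnerB_eq_iff hd hc) (domMS_eExt_removeRunnerB_iff hd
    (by rw [filter_eq_topBeads hB₁ hf₁, filter_eq_topBeads hB₂ hf₂, hc]))

end Bijection

lemma betaSet_removeRunnerP {e : ℕ} (he : 0 < e) (k r : ℕ) {g : ℕ → ℕ} (hg : IsPartition g) :
    betaSet (removeRunnerP e k r g) (r - runnerCount e ((r + k) % e) (betaSet g r)) =
      removeRunnerB e ((r + k) % e) (betaSet g r) := by
  have h := betaSet_partOfBeta (nodup_removeRunnerB (Nat.mod_lt (r + k) he) (nodup_betaSet hg r))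
  rwa [card_removeRunnerB, card_betaSet] at h

theorem stmt7_general (e k r : ℕ) (he : 3 ≤ e) (f : ℕ → ℕ)
    (hf : IsPartition f) (hke : KEmpty e k r f) :
    Set.BijOn (removeRunnerP e k r)
      {g : ℕ → ℕ | IsPartition g ∧ conj g 0 ≤ r ∧ KEmpty e k r g ∧
        coreBeta e (betaSet g r) = coreBeta e (betaSet f r)}
      {p : ℕ → ℕ | IsPartition p ∧
        conj p 0 ≤ r - runnerCount e ((r + k) % e) (betaSet f r) ∧
        coreBeta (e - 1) (betaSet p (r - runnerCount e ((r + k) % e) (betaSet f r))) =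
          coreBeta (e - 1) (betaSet (removeRunnerP e k r f)
            (r - runnerCount e ((r + k) % e) (betaSet f r)))} ∧
    ∀ g : ℕ → ℕ, IsPartition g → conj g 0 ≤ r → KEmpty e k r g →
      coreBeta e (betaSet g r) = coreBeta e (betaSet f r) →
      (Dominates e r g f ↔
        Dominates (e - 1) (r - runnerCount e ((r + k) % e) (betaSet f r))
          (removeRunnerP e k r g) (removeRunnerP e k r f)) := by
  have he0 : 0 < e := by omega
  have hd : (r + k) % e < e := Nat.mod_lt _ he0
  have hbetaf := betaSet_removeRunnerP he0 k r hf
  refine ⟨?_, fun g hg _ hgk hgc => ?_⟩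
  · have hr : runnerCount e ((r + k) % e) (betaSet f r) ≤ r := by
      have := Multiset.card_le_card (Multiset.filter_le (· % e = (r + k) % e) (betaSet f r))
      rwa [card_betaSet] at this
    rw [hbetaf]
    exact (bijOn_partOfBeta _ _).comp
      ((bijOn_removeRunnerB (by omega) hd hr).comp (bijOn_betaSet r _))
  · have hc := coreBeta_eq_iff.mp hgc _ hd
    have hbetag := betaSet_removeRunnerP he0 k r hg
    rw [hc] at hbetag
    rw [Dominates, Dominates, hbetag, hbetaf]
    exact (dominance_removeRunnerB_iff hd (nodup_betaSet hg r) (nodup_betaSet hf r) hgk hke hc).symm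

/-- runner removal is a bijection between k-empty partitions with the
same e-core as λ and partitions with the same (e-1)-core as λ^{-k} (all displayed
with r, resp. r - c, beads), and it preserves and reflects the dominance order. -/
theorem stmt7 (e k r : ℕ) (he : 3 ≤ e) (hk : k < e) (f : ℕ → ℕ)
    (hf : IsPartition f) (hr : conj f 0 ≤ r) (hke : KEmpty e k r f) :
    Set.BijOn (removeRunnerP e k r)
      {g : ℕ → ℕ | IsPartition g ∧ conj g 0 ≤ r ∧ KEmpty e k r g ∧
        coreBeta e (betaSet g r) = coreBeta e (betaSet f r)}
      {p : ℕ → ℕ | IsPartition p ∧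
        conj p 0 ≤ r - runnerCount e ((r + k) % e) (betaSet f r) ∧
        coreBeta (e - 1) (betaSet p (r - runnerCount e ((r + k) % e) (betaSet f r))) =
          coreBeta (e - 1) (betaSet (removeRunnerP e k r f)
            (r - runnerCount e ((r + k) % e) (betaSet f r)))} ∧
    ∀ g : ℕ → ℕ, IsPartition g → conj g 0 ≤ r → KEmpty e k r g →
      coreBeta e (betaSet g r) = coreBeta e (betaSet f r) →
      (Dominates e r g f ↔
        Dominates (e - 1) (r - runnerCount e ((r + k) % e) (betaSet f r))
          (removeRunnerP e k r g) (removeRunnerP e k r f)) :=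
  stmt7_general e k r he f hf hke
end

section
/- Suppose λ and μ are k-empty partitions with μ ⊵ λ in the refined dominance order. Then 𝔏_k(μ) ≥ 𝔏_k(λ). -/
open scoped BigOperators

lemma filter_card_le_of_rel {I J : Multiset ℕ} {p : ℕ → Prop} [DecidablePred p]
    (h : Multiset.Rel (fun a b => b ≤ a) I J) (hp : ∀ a b, b ≤ a → p b → p a) :
    Multiset.card (J.filter p) ≤ Multiset.card (I.filter p) := by
  induction h with
  | zero => simp
  | cons hab ht ih =>
    rename_i a b I' J'
    by_cases hb : p b
    · have ha : p a := hp a b hab hb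
      simp only [Multiset.filter_cons, Multiset.card_add, if_pos ha, if_pos hb,
        Multiset.card_singleton]
      omega
    · by_cases ha : p a <;>
        simp only [Multiset.filter_cons, Multiset.card_add, ha, hb, if_true, if_false,
          Multiset.card_singleton, Multiset.card_zero] <;> omega

lemma my_filter_bind {α β : Type*} (p : β → Prop) [DecidablePred p]
    (s : Multiset α) (f : α → Multiset β) :
    (s.bind f).filter p = s.bind fun a => (f a).filter p := by
  induction s using Multiset.induction with
  | empty => simp
  | cons a s ih => simp [Multiset.cons_bind, Multiset.filter_add, ih]

lemma runnerCount_coreBeta_s8 (e d : ℕ) (hd : d < e) (B : Multiset ℕ) :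
    Multiset.card ((coreBeta e B).filter (fun b => b % e = d)) = runnerCount e d B := by
  unfold coreBeta
  rw [my_filter_bind, Multiset.card_bind]
  have key : ∀ j ∈ Multiset.range e,
      (Multiset.card ∘ fun j => Multiset.filter (fun b => b % e = d)
        (Multiset.map (fun i => j + i * e) (Multiset.range (runnerCount e j B)))) j
      = if j = d then runnerCount e j B else 0 := by
    intro j hj
    rw [Multiset.mem_range] at hj
    have hmod : ∀ i : ℕ, (j + i * e) % e = j := by
      intro i; simp [Nat.add_mul_mod_self_right, Nat.mod_eq_of_lt hj]
    simp only [Function.comp_apply, Multiset.filter_map, Multiset.card_map]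
    by_cases hjd : j = d
    · rw [Multiset.filter_eq_self.2 (fun a _ => by simp [hmod a, hjd, Nat.mod_eq_of_lt hd]), if_pos hjd,
        Multiset.card_range]
    · rw [Multiset.filter_eq_nil.2 (fun a _ => by simp [hmod a, hjd]), if_neg hjd,
        Multiset.card_zero]
  rw [Multiset.map_congr rfl key]
  have h2 : ((Multiset.range e).map (fun j => if j = d then runnerCount e j B else 0)).sum
      = ∑ j ∈ Finset.range e, if j = d then runnerCount e j B else 0 := rfl
  rw [h2, Finset.sum_ite_eq' (Finset.range e) d (fun j => runnerCount e j B),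
    if_pos (Finset.mem_range.2 hd)]

/-- if λ, μ are k-empty and μ ⊵ λ then 𝔏_k(μ) ≥ 𝔏_k(λ). -/
theorem stmt8 (e k r : ℕ) (he : 2 ≤ e) (hk : k < e) (f g : ℕ → ℕ)
    (hf : IsPartition f) (hg : IsPartition g)
    (hrf : conj f 0 ≤ r) (hrg : conj g 0 ≤ r)
    (hkf : KEmpty e k r f) (hkg : KEmpty e k r g)
    (hdom : Dominates e r g f) :
    Lk e k r f ≤ Lk e k r g := by
  obtain ⟨hcore, hrel⟩ := hdom
  set d := (r + k) % e with hd
  have hde : d < e := Nat.mod_lt _ (by omega)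
  have hrc : runnerCount e d (betaSet g r) = runnerCount e d (betaSet f r) := by
    rw [← runnerCount_coreBeta_s8 e d hde, ← runnerCount_coreBeta_s8 e d hde, hcore]
  unfold Lk
  rw [← hd, hrc]
  exact filter_card_le_of_rel hrel (fun a b hba hb => lt_of_lt_of_le hb hba)
end

section
/- Let λ be a k-empty partition and r a large integer, with d = (r+k) mod e and c the number of beads on runner d. For an integer β define β° = ⌊(β - d - (c-1)e)/e⌋ if β ≥ d + (c-1)e, and β° = 0 otherwise. Then 𝔏_k(λ) = Σ_{β ∈ 𝔅_r(λ)} β°. -/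
open scoped BigOperators

/-
A bead at `b` contributes the chain `b, b - e, b - 2e, …` to the e-extension. The number of
chain elements that are `≥ T` rather than `> T`, for `T = d + c e`, is `⌊(b - T + e) / e⌋ = β°`
(and `0` if `b < T - e`); the two counts differ only if `T` lies on the chain, i.e.
`b ≡ T (mod e)` and `b ≥ T`, which is exactly what k-emptiness rules out.
-/

theorem Multiset.countP_lt_range (m n : ℕ) :
    (Multiset.range n).countP (· < m) = min m n := by
  induction n with
  | zero => simp
  | succ n ih =>
    rw [Multiset.range_succ, Multiset.countP_cons, ih]
    by_cases h : n < m <;> simp [h] <;> omega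

theorem countP_lt_sub_mul_range {e T b : ℕ} (he : 0 < e) (hb : b % e = T % e → b < T) :
    ((Multiset.range (b / e + 1)).map fun j => b - j * e).countP (T < ·) = (b + e - T) / e := by
  have lt_iff (j : ℕ) : T < b - j * e ↔ j < (b + e - T) / e := by
    have hne : b ≠ T + j * e := fun h => by
      have := hb (by rw [h, Nat.add_mul_mod_self_right]); omega
    rw [show j < (b + e - T) / e ↔ (j + 1) * e ≤ b + e - T from Nat.le_div_iff_mul_le he,
      add_mul, one_mul]
    omega
  have hle : (b + e - T) / e ≤ b / e + 1 :=
    (Nat.div_le_div_right (by omega)).trans (Nat.add_div_right b he).le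
  rw [Multiset.countP_map, ← Multiset.countP_eq_card_filter,
    Multiset.countP_congr rfl fun j _ => propext (lt_iff j),
    Multiset.countP_lt_range, min_eq_left hle]

theorem natCast_add_sub_div (b e T : ℕ) :
    (((b + e - T) / e : ℕ) : ℤ) = if (T : ℤ) - e ≤ b then ((b : ℤ) - T + e) / e else 0 := by
  split_ifs with h
  · rw [Int.natCast_div]
    congr 1
    omega
  · rw [Nat.div_eq_zero_iff.mpr (by omega), Nat.cast_zero]

theorem stmt10_general (e k r : ℕ) (he : 2 ≤ e) (f : ℕ → ℕ)
    (hke : KEmpty e k r f) :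
    (Lk e k r f : ℤ) =
      ((betaSet f r).map fun b =>
        if ((r + k) % e : ℤ) + ((runnerCount e ((r + k) % e) (betaSet f r) : ℤ) - 1) * e
            ≤ (b : ℤ) then
          ((b : ℤ) - ((r + k) % e : ℤ)
            - ((runnerCount e ((r + k) % e) (betaSet f r) : ℤ) - 1) * e) / e
        else 0).sum := by
  set d := (r + k) % e
  set c := runnerCount e d (betaSet f r)
  rw [Lk, eExt, Multiset.filter_bind, Multiset.card_bind, Nat.cast_multiset_sum,
    Multiset.map_map]
  simp only [bind_pure_comp, Functor.map, Multiset.map_map, Function.comp_apply]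
  refine congrArg Multiset.sum (Multiset.map_congr rfl fun b hb => ?_)
  have hb_runner : b % e = (d + c * e) % e → b < d + c * e := fun h =>
    hke b hb (by rwa [Nat.add_mul_mod_self_right, Nat.mod_mod] at h)
  rw [← Multiset.countP_eq_card_filter, countP_lt_sub_mul_range (by omega) hb_runner,
    natCast_add_sub_div]
  push_cast [d]
  congr 2 <;> ring

/-- 𝔏_k(λ) = Σ_{β ∈ 𝔅_r(λ)} β°, where β° = ⌊(β - d - (c-1)e)/e⌋ for
β ≥ d + (c-1)e and β° = 0 otherwise. -/
theorem stmt10 (e k r : ℕ) (he : 2 ≤ e) (hk : k < e) (f : ℕ → ℕ)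
    (hf : IsPartition f) (hr : conj f 0 ≤ r) (hke : KEmpty e k r f) :
    (Lk e k r f : ℤ) =
      ((betaSet f r).map fun b =>
        if ((r + k) % e : ℤ) + ((runnerCount e ((r + k) % e) (betaSet f r) : ℤ) - 1) * e
            ≤ (b : ℤ) then
          ((b : ℤ) - ((r + k) % e : ℤ)
            - ((runnerCount e ((r + k) % e) (betaSet f r) : ℤ) - 1) * e) / e
        else 0).sum :=
  stmt10_general e k r he f hke
end
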